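/- arXiv:2309.14862 — 8 statements merged into one kernel-verified Lean document; each statement's English description precedes it below -/
import Mathlib

section
/- There exists an open convex realization of the Fano plane code FP in ℝ⁶: there is a family U₁,…,U₇ of open convex subsets of ℝ⁶ with code(U₁,…,U₇) = FP. In particular odim(FP) ≤ 6. -/
/-- The code of a family of sets. -/
def code {X : Type*} {n : ℕ} (U : Fin n → Set X) : Set (Finset (Fin n)) :=
  {σ | ∃ p : X, ∀ i, p ∈ U i ↔ i ∈ σ}

/-- The Fano plane code, on neurons `0,…,6` (representing `1,…,7`). -/
def FP : Set (Finset (Fin 7)) :=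
  {{0,1,2}, {0,3,4}, {0,5,6}, {1,3,5}, {1,4,6}, {2,3,6}, {2,4,5},
   {0}, {1}, {2}, {3}, {4}, {5}, {6}, ∅}

/-! ### Auxiliary construction -/

/-- The lines of the Fano plane (these are exactly the triple codewords of `FP`). -/
def lineF : Fin 7 → Finset (Fin 7) :=
  ![{0,1,2}, {0,3,4}, {0,5,6}, {1,3,5}, {1,4,6}, {2,3,6}, {2,4,5}]

/-- Barycentric-style coordinates on `ℝ⁶`, one coordinate per line of the Fano plane;
they always sum to `1`. -/
def tc (x : Fin 6 → ℝ) : Fin 7 → ℝ :=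
  ![x 0, x 1, x 2, x 3, x 4, x 5, 1 - (x 0 + x 1 + x 2 + x 3 + x 4 + x 5)]

/-- The realization: `Ureal i` consists of the points all of whose line-coordinates are
positive and whose coordinates at lines *not* through `i` are smaller than `1/100`. -/
def Ureal (i : Fin 7) : Set (Fin 6 → ℝ) :=
  {x | ∀ ℓ, 0 < tc x ℓ ∧ (i ∉ lineF ℓ → tc x ℓ < 1/100)}

section vec
variable {α : Type*} (a0 a1 a2 a3 a4 a5 a6 : α)
@[simp] lemma vec6_0 : ![a0,a1,a2,a3,a4,a5] (0 : Fin 6) = a0 := rfl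
@[simp] lemma vec6_1 : ![a0,a1,a2,a3,a4,a5] (1 : Fin 6) = a1 := rfl
@[simp] lemma vec6_2 : ![a0,a1,a2,a3,a4,a5] (2 : Fin 6) = a2 := rfl
@[simp] lemma vec6_3 : ![a0,a1,a2,a3,a4,a5] (3 : Fin 6) = a3 := rfl
@[simp] lemma vec6_4 : ![a0,a1,a2,a3,a4,a5] (4 : Fin 6) = a4 := rfl
@[simp] lemma vec6_5 : ![a0,a1,a2,a3,a4,a5] (5 : Fin 6) = a5 := rfl
@[simp] lemma vec7_0 : ![a0,a1,a2,a3,a4,a5,a6] (0 : Fin 7) = a0 := rfl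
@[simp] lemma vec7_1 : ![a0,a1,a2,a3,a4,a5,a6] (1 : Fin 7) = a1 := rfl
@[simp] lemma vec7_2 : ![a0,a1,a2,a3,a4,a5,a6] (2 : Fin 7) = a2 := rfl
@[simp] lemma vec7_3 : ![a0,a1,a2,a3,a4,a5,a6] (3 : Fin 7) = a3 := rfl
@[simp] lemma vec7_4 : ![a0,a1,a2,a3,a4,a5,a6] (4 : Fin 7) = a4 := rfl
@[simp] lemma vec7_5 : ![a0,a1,a2,a3,a4,a5,a6] (5 : Fin 7) = a5 := rfl
@[simp] lemma vec7_6 : ![a0,a1,a2,a3,a4,a5,a6] (6 : Fin 7) = a6 := rfl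
end vec

lemma fin7_forall {P : Fin 7 → Prop} : (∀ ℓ, P ℓ) ↔ P 0 ∧ P 1 ∧ P 2 ∧ P 3 ∧ P 4 ∧ P 5 ∧ P 6 :=
  ⟨fun h => ⟨h 0, h 1, h 2, h 3, h 4, h 5, h 6⟩,
   fun ⟨h0,h1,h2,h3,h4,h5,h6⟩ ℓ => by fin_cases ℓ <;> assumption⟩

lemma tc_sum (x : Fin 6 → ℝ) : ∑ ℓ, tc x ℓ = 1 := by
  simp [Fin.sum_univ_seven, tc]

lemma tc_cont (ℓ : Fin 7) : Continuous fun x : Fin 6 → ℝ => tc x ℓ := by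
  fin_cases ℓ <;> simp [tc] <;> fun_prop

lemma tc_affine (x y : Fin 6 → ℝ) {a b : ℝ} (hab : a + b = 1) (ℓ : Fin 7) :
    tc (a • x + b • y) ℓ = a * tc x ℓ + b * tc y ℓ := by
  fin_cases ℓ <;>
    simp [tc, Pi.add_apply, Pi.smul_apply, smul_eq_mul] <;>
    linear_combination -hab

lemma Ureal_open (i : Fin 7) : IsOpen (Ureal i) := by
  have : Ureal i = ⋂ ℓ, ({x | 0 < tc x ℓ} ∩ {x | i ∉ lineF ℓ → tc x ℓ < 1/100}) := by
    ext x; simp [Ureal, Set.mem_iInter, forall_and]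
  rw [this]
  refine isOpen_iInter_of_finite fun ℓ => ?_
  refine IsOpen.inter (isOpen_lt continuous_const (tc_cont ℓ)) ?_
  by_cases h : i ∈ lineF ℓ
  · simp [h]
  · simpa [h] using isOpen_lt (tc_cont ℓ) continuous_const

lemma combo_pos {a b p q : ℝ} (ha : 0 ≤ a) (hb : 0 ≤ b) (hab : a + b = 1)
    (hp : 0 < p) (hq : 0 < q) : 0 < a * p + b * q := by
  rcases ha.eq_or_lt with h | h
  · have hb1 : b = 1 := by linarith
    rw [← h, hb1]; linarith
  · nlinarith [mul_nonneg hb hq.le]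

lemma combo_lt {a b p q c : ℝ} (ha : 0 ≤ a) (hb : 0 ≤ b) (hab : a + b = 1)
    (hp : p < c) (hq : q < c) : a * p + b * q < c := by
  rcases ha.eq_or_lt with h | h
  · have hb1 : b = 1 := by linarith
    rw [← h, hb1]; linarith
  · have h1 : a * p < a * c := mul_lt_mul_of_pos_left hp h
    have h2 : b * q ≤ b * c := mul_le_mul_of_nonneg_left hq.le hb
    have h3 : a * c + b * c = c := by linear_combination c * hab
    linarith

lemma Ureal_convex (i : Fin 7) : Convex ℝ (Ureal i) := by
  intro x hx y hy a b ha hb hab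
  intro ℓ
  obtain ⟨hx1, hx2⟩ := hx ℓ
  obtain ⟨hy1, hy2⟩ := hy ℓ
  rw [tc_affine x y hab ℓ]
  exact ⟨combo_pos ha hb hab hx1 hy1, fun h => combo_lt ha hb hab (hx2 h) (hy2 h)⟩

/-! ### Fano combinatorics (by `decide`) -/

lemma line_exists : ∀ i j : Fin 7, i ≠ j → ∃ ℓ, i ∈ lineF ℓ ∧ j ∈ lineF ℓ := by decide

lemma line_unique : ∀ (i j ℓ ℓ' : Fin 7), i ≠ j → i ∈ lineF ℓ → j ∈ lineF ℓ → ℓ' ≠ ℓ →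
    (i ∉ lineF ℓ' ∨ j ∉ lineF ℓ') := by decide

lemma lineF_mem_FP : ∀ ℓ, lineF ℓ ∈ FP := by
  intro ℓ
  fin_cases ℓ <;>
    simp only [lineF, FP, Set.mem_insert_iff, Set.mem_singleton_iff,
      Matrix.cons_val_zero, Matrix.cons_val_one, Matrix.head_cons] <;> decide

lemma singleton_mem_FP : ∀ a : Fin 7, ({a} : Finset (Fin 7)) ∈ FP := by
  intro a
  fin_cases a <;>
    simp only [FP, Set.mem_insert_iff, Set.mem_singleton_iff] <;> decide

lemma empty_mem_FP : (∅ : Finset (Fin 7)) ∈ FP := by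
  simp only [FP, Set.mem_insert_iff, Set.mem_singleton_iff]; decide

/-- If a codeword of the realization contains two distinct neurons, it is a full line. -/
lemma code_sub (σ : Finset (Fin 7)) (x : Fin 6 → ℝ)
    (hx : ∀ i, x ∈ Ureal i ↔ i ∈ σ)
    (i j : Fin 7) (hij : i ≠ j) (hi : i ∈ σ) (hj : j ∈ σ) :
    ∃ ℓ, σ = lineF ℓ := by
  obtain ⟨ℓ, hiℓ, hjℓ⟩ := line_exists i j hij
  have hxi : x ∈ Ureal i := (hx i).2 hi
  have hxj : x ∈ Ureal j := (hx j).2 hj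
  have hpos : ∀ ℓ', 0 < tc x ℓ' := fun ℓ' => (hxi ℓ').1
  have hsmall : ∀ ℓ', ℓ' ≠ ℓ → tc x ℓ' < 1/100 := by
    intro ℓ' hne
    rcases line_unique i j ℓ ℓ' hij hiℓ hjℓ hne with h | h
    · exact (hxi ℓ').2 h
    · exact (hxj ℓ').2 h
  have hbig : 1/100 < tc x ℓ := by
    have h1 : tc x ℓ + ∑ ℓ' ∈ Finset.univ.erase ℓ, tc x ℓ' = 1 := by
      rw [Finset.add_sum_erase _ _ (Finset.mem_univ ℓ)]
      exact tc_sum x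
    have hcard : (Finset.univ.erase ℓ).card = 6 := by
      rw [Finset.card_erase_of_mem (Finset.mem_univ ℓ)]; simp
    have hne : (Finset.univ.erase ℓ).Nonempty := by
      rw [← Finset.card_pos, hcard]; norm_num
    have h2 : ∑ ℓ' ∈ Finset.univ.erase ℓ, tc x ℓ' <
        ∑ _ℓ' ∈ Finset.univ.erase ℓ, (1/100 : ℝ) := by
      refine Finset.sum_lt_sum_of_nonempty hne fun ℓ' hℓ' => ?_
      exact hsmall ℓ' (Finset.ne_of_mem_erase hℓ')
    rw [Finset.sum_const, hcard] at h2
    simp only [nsmul_eq_mul] at h2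
    push_cast at h2
    linarith
  refine ⟨ℓ, ?_⟩
  ext m
  constructor
  · intro hm
    by_contra hml
    have hxm : x ∈ Ureal m := (hx m).2 hm
    have := (hxm ℓ).2 hml
    linarith
  · intro hm
    apply (hx m).1
    intro ℓ'
    refine ⟨hpos ℓ', fun hmℓ' => ?_⟩
    rcases eq_or_ne ℓ' ℓ with rfl | hne
    · exact absurd hm hmℓ'
    · exact hsmall ℓ' hne

lemma wit (σ : Finset (Fin 7)) (x : Fin 6 → ℝ) (h : ∀ i, x ∈ Ureal i ↔ i ∈ σ) :
    σ ∈ code Ureal := ⟨x, h⟩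

set_option maxHeartbeats 1000000 in
lemma code_Ureal_eq : code Ureal = FP := by
  ext σ
  constructor
  · rintro ⟨x, hx⟩
    by_cases hpair : ∃ i ∈ σ, ∃ j ∈ σ, i ≠ j
    · obtain ⟨i, hi, j, hj, hij⟩ := hpair
      obtain ⟨ℓ, hσ⟩ := code_sub σ x hx i j hij hi hj
      rw [hσ]
      exact lineF_mem_FP ℓ
    · push_neg at hpair
      rcases Finset.eq_empty_or_nonempty σ with rfl | ⟨a, ha⟩
      · exact empty_mem_FP
      · have hσ : σ = {a} :=
          Finset.eq_singleton_iff_unique_mem.mpr ⟨ha, fun b hb => hpair b hb a ha⟩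
        rw [hσ]
        exact singleton_mem_FP a
  · intro hσ
    simp only [FP, Set.mem_insert_iff, Set.mem_singleton_iff] at hσ
    rcases hσ with rfl|rfl|rfl|rfl|rfl|rfl|rfl|rfl|rfl|rfl|rfl|rfl|rfl|rfl|rfl
    · exact wit _ ![97/100,1/200,1/200,1/200,1/200,1/200] (by
        intro i; fin_cases i <;>
          simp only [Ureal, Set.mem_setOf_eq, fin7_forall, tc, lineF,
            vec6_0, vec6_1, vec6_2, vec6_3, vec6_4, vec6_5,
            vec7_0, vec7_1, vec7_2, vec7_3, vec7_4, vec7_5, vec7_6] <;>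
          norm_num <;> decide)
    · exact wit _ ![1/200,97/100,1/200,1/200,1/200,1/200] (by
        intro i; fin_cases i <;>
          simp only [Ureal, Set.mem_setOf_eq, fin7_forall, tc, lineF,
            vec6_0, vec6_1, vec6_2, vec6_3, vec6_4, vec6_5,
            vec7_0, vec7_1, vec7_2, vec7_3, vec7_4, vec7_5, vec7_6] <;>
          norm_num <;> decide)
    · exact wit _ ![1/200,1/200,97/100,1/200,1/200,1/200] (by
        intro i; fin_cases i <;>
          simp only [Ureal, Set.mem_setOf_eq, fin7_forall, tc, lineF,
            vec6_0, vec6_1, vec6_2, vec6_3, vec6_4, vec6_5,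
            vec7_0, vec7_1, vec7_2, vec7_3, vec7_4, vec7_5, vec7_6] <;>
          norm_num <;> decide)
    · exact wit _ ![1/200,1/200,1/200,97/100,1/200,1/200] (by
        intro i; fin_cases i <;>
          simp only [Ureal, Set.mem_setOf_eq, fin7_forall, tc, lineF,
            vec6_0, vec6_1, vec6_2, vec6_3, vec6_4, vec6_5,
            vec7_0, vec7_1, vec7_2, vec7_3, vec7_4, vec7_5, vec7_6] <;>
          norm_num <;> decide)
    · exact wit _ ![1/200,1/200,1/200,1/200,97/100,1/200] (by
        intro i; fin_cases i <;>
          simp only [Ureal, Set.mem_setOf_eq, fin7_forall, tc, lineF,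
            vec6_0, vec6_1, vec6_2, vec6_3, vec6_4, vec6_5,
            vec7_0, vec7_1, vec7_2, vec7_3, vec7_4, vec7_5, vec7_6] <;>
          norm_num <;> decide)
    · exact wit _ ![1/200,1/200,1/200,1/200,1/200,97/100] (by
        intro i; fin_cases i <;>
          simp only [Ureal, Set.mem_setOf_eq, fin7_forall, tc, lineF,
            vec6_0, vec6_1, vec6_2, vec6_3, vec6_4, vec6_5,
            vec7_0, vec7_1, vec7_2, vec7_3, vec7_4, vec7_5, vec7_6] <;>
          norm_num <;> decide)
    · exact wit _ ![1/200,1/200,1/200,1/200,1/200,1/200] (by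
        intro i; fin_cases i <;>
          simp only [Ureal, Set.mem_setOf_eq, fin7_forall, tc, lineF,
            vec6_0, vec6_1, vec6_2, vec6_3, vec6_4, vec6_5,
            vec7_0, vec7_1, vec7_2, vec7_3, vec7_4, vec7_5, vec7_6] <;>
          norm_num <;> decide)
    · exact wit _ ![49/150,49/150,49/150,1/200,1/200,1/200] (by
        intro i; fin_cases i <;>
          simp only [Ureal, Set.mem_setOf_eq, fin7_forall, tc, lineF,
            vec6_0, vec6_1, vec6_2, vec6_3, vec6_4, vec6_5,
            vec7_0, vec7_1, vec7_2, vec7_3, vec7_4, vec7_5, vec7_6] <;>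
          norm_num <;> decide)
    · exact wit _ ![49/150,1/200,1/200,49/150,49/150,1/200] (by
        intro i; fin_cases i <;>
          simp only [Ureal, Set.mem_setOf_eq, fin7_forall, tc, lineF,
            vec6_0, vec6_1, vec6_2, vec6_3, vec6_4, vec6_5,
            vec7_0, vec7_1, vec7_2, vec7_3, vec7_4, vec7_5, vec7_6] <;>
          norm_num <;> decide)
    · exact wit _ ![49/150,1/200,1/200,1/200,1/200,49/150] (by
        intro i; fin_cases i <;>
          simp only [Ureal, Set.mem_setOf_eq, fin7_forall, tc, lineF,
            vec6_0, vec6_1, vec6_2, vec6_3, vec6_4, vec6_5,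
            vec7_0, vec7_1, vec7_2, vec7_3, vec7_4, vec7_5, vec7_6] <;>
          norm_num <;> decide)
    · exact wit _ ![1/200,49/150,1/200,49/150,1/200,49/150] (by
        intro i; fin_cases i <;>
          simp only [Ureal, Set.mem_setOf_eq, fin7_forall, tc, lineF,
            vec6_0, vec6_1, vec6_2, vec6_3, vec6_4, vec6_5,
            vec7_0, vec7_1, vec7_2, vec7_3, vec7_4, vec7_5, vec7_6] <;>
          norm_num <;> decide)
    · exact wit _ ![1/200,49/150,1/200,1/200,49/150,1/200] (by
        intro i; fin_cases i <;>
          simp only [Ureal, Set.mem_setOf_eq, fin7_forall, tc, lineF,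
            vec6_0, vec6_1, vec6_2, vec6_3, vec6_4, vec6_5,
            vec7_0, vec7_1, vec7_2, vec7_3, vec7_4, vec7_5, vec7_6] <;>
          norm_num <;> decide)
    · exact wit _ ![1/200,1/200,49/150,49/150,1/200,1/200] (by
        intro i; fin_cases i <;>
          simp only [Ureal, Set.mem_setOf_eq, fin7_forall, tc, lineF,
            vec6_0, vec6_1, vec6_2, vec6_3, vec6_4, vec6_5,
            vec7_0, vec7_1, vec7_2, vec7_3, vec7_4, vec7_5, vec7_6] <;>
          norm_num <;> decide)
    · exact wit _ ![1/200,1/200,49/150,1/200,49/150,49/150] (by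
        intro i; fin_cases i <;>
          simp only [Ureal, Set.mem_setOf_eq, fin7_forall, tc, lineF,
            vec6_0, vec6_1, vec6_2, vec6_3, vec6_4, vec6_5,
            vec7_0, vec7_1, vec7_2, vec7_3, vec7_4, vec7_5, vec7_6] <;>
          norm_num <;> decide)
    · exact wit _ ![2,0,0,0,0,0] (by
        intro i; fin_cases i <;>
          simp only [Ureal, Set.mem_setOf_eq, fin7_forall, tc, lineF,
            vec6_0, vec6_1, vec6_2, vec6_3, vec6_4, vec6_5,
            vec7_0, vec7_1, vec7_2, vec7_3, vec7_4, vec7_5, vec7_6] <;>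
          norm_num <;> decide)

theorem open_realization_FP_dim6 :
    (∃ U : Fin 7 → Set (Fin 6 → ℝ),
      (∀ i, IsOpen (U i) ∧ Convex ℝ (U i)) ∧ code U = FP) ∧
    sInf {d : ℕ | ∃ U : Fin 7 → Set (Fin d → ℝ),
      (∀ i, IsOpen (U i) ∧ Convex ℝ (U i)) ∧ code U = FP} ≤ 6 := by
  have main : ∃ U : Fin 7 → Set (Fin 6 → ℝ),
      (∀ i, IsOpen (U i) ∧ Convex ℝ (U i)) ∧ code U = FP :=
    ⟨Ureal, fun i => ⟨Ureal_open i, Ureal_convex i⟩, code_Ureal_eq⟩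
  exact ⟨main, Nat.sInf_le main⟩
end

section
/- Let m₁, …, m₇ be the seven maximal codewords of the Fano plane code FP (the triples {1,2,3},{1,4,5},{1,6,7},{2,4,6},{2,5,7},{3,4,7},{3,5,6}). For every choice of ordered pairs (m_i, m_j) and (m_k, m_ℓ) with i ≠ j and k ≠ ℓ, there exists a permutation Π of {1,…,7} such that the elementwise image of every codeword of FP under Π is again a codeword of FP (i.e. FP is invariant under Π), and Π maps m_i onto m_k and m_j onto m_ℓ. -/
/-- The seven maximal codewords of the Fano plane code. -/
def mx : Fin 7 → Finset (Fin 7) :=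
  ![{0,1,2}, {0,3,4}, {0,5,6}, {1,3,5}, {1,4,6}, {2,3,6}, {2,4,5}]

def FPF : Finset (Finset (Fin 7)) :=
  {{0,1,2}, {0,3,4}, {0,5,6}, {1,3,5}, {1,4,6}, {2,3,6}, {2,4,5},
   {0}, {1}, {2}, {3}, {4}, {5}, {6}, ∅}

lemma FP_eq : FP = ↑FPF := by
  ext c
  simp [FP, FPF]

def ftab : Fin 7 → Fin 7 → Fin 7 → Fin 7 :=
  ![![![0, 1, 2, 3, 4, 5, 6], ![0, 1, 2, 3, 4, 5, 6], ![0, 1, 2, 5, 6, 3, 4], ![1, 0, 2, 3, 5, 4, 6], ![1, 0, 2, 4, 6, 3, 5], ![2, 0, 1, 3, 6, 4, 5], ![2, 0, 1, 4, 5, 3, 6]],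
    ![![0, 3, 4, 1, 2, 5, 6], ![0, 1, 2, 3, 4, 5, 6], ![0, 3, 4, 5, 6, 1, 2], ![3, 0, 4, 1, 5, 2, 6], ![4, 0, 3, 1, 6, 2, 5], ![3, 0, 4, 2, 6, 1, 5], ![4, 0, 3, 2, 5, 1, 6]],
    ![![0, 5, 6, 1, 2, 3, 4], ![0, 5, 6, 3, 4, 1, 2], ![0, 1, 2, 3, 4, 5, 6], ![5, 0, 6, 1, 3, 2, 4], ![6, 0, 5, 1, 4, 2, 3], ![6, 0, 5, 2, 3, 1, 4], ![5, 0, 6, 2, 4, 1, 3]],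
    ![![1, 3, 5, 0, 2, 4, 6], ![3, 1, 5, 0, 4, 2, 6], ![5, 1, 3, 0, 6, 2, 4], ![0, 1, 2, 3, 4, 5, 6], ![1, 3, 5, 4, 6, 0, 2], ![3, 1, 5, 2, 6, 0, 4], ![5, 1, 3, 2, 4, 0, 6]],
    ![![1, 4, 6, 0, 2, 3, 5], ![4, 1, 6, 0, 3, 2, 5], ![6, 1, 4, 0, 5, 2, 3], ![1, 4, 6, 3, 5, 0, 2], ![0, 1, 2, 3, 4, 5, 6], ![6, 1, 4, 2, 3, 0, 5], ![4, 1, 6, 2, 5, 0, 3]],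
    ![![2, 3, 6, 0, 1, 4, 5], ![3, 2, 6, 0, 4, 1, 5], ![6, 2, 3, 0, 5, 1, 4], ![3, 2, 6, 1, 5, 0, 4], ![6, 2, 3, 1, 4, 0, 5], ![0, 1, 2, 3, 4, 5, 6], ![2, 3, 6, 4, 5, 0, 1]],
    ![![2, 4, 5, 0, 1, 3, 6], ![4, 2, 5, 0, 3, 1, 6], ![5, 2, 4, 0, 6, 1, 3], ![5, 2, 4, 1, 3, 0, 6], ![4, 2, 5, 1, 6, 0, 3], ![2, 4, 5, 3, 6, 0, 1], ![0, 1, 2, 3, 4, 5, 6]]]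

lemma ftab_bij : ∀ i j, Function.Bijective (ftab i j) := by decide

lemma ftab_FPF : ∀ i j, FPF.image (fun c => c.image (ftab i j)) = FPF := by decide

lemma ftab_mx : ∀ i j, i ≠ j →
    (mx 0).image (ftab i j) = mx i ∧ (mx 1).image (ftab i j) = mx j := by decide

/-- permutation from the table -/
noncomputable def σ (i j : Fin 7) : Equiv.Perm (Fin 7) := Equiv.ofBijective (ftab i j) (ftab_bij i j)

lemma σ_coe (i j : Fin 7) : ⇑(σ i j) = ftab i j := rfl

lemma image_symm_image (g : Equiv.Perm (Fin 7)) (s : Finset (Fin 7)) :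
    (s.image g).image g.symm = s := by
  rw [Finset.image_image]
  simp

lemma FPF_symm (g : Equiv.Perm (Fin 7))
    (h : FPF.image (fun c => c.image g) = FPF) :
    FPF.image (fun c => c.image g.symm) = FPF := by
  conv_lhs => rw [← h]
  rw [Finset.image_image]
  have : ((fun c : Finset (Fin 7) => c.image g.symm) ∘ fun c => c.image g) = id := by
    funext c
    simp [Function.comp, image_symm_image]
  rw [this, Finset.image_id]

/-- The symmetry group of the Fano plane is doubly transitive on lines:
any ordered pair of distinct maximal codewords can be mapped to any other such
pair by a permutation of the neurons leaving `FP` invariant. -/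
theorem fano_doubly_transitive :
    ∀ i j k l : Fin 7, i ≠ j → k ≠ l →
      ∃ g : Equiv.Perm (Fin 7),
        (fun c : Finset (Fin 7) => c.image g) '' FP = FP ∧
        (mx i).image g = mx k ∧ (mx j).image g = mx l := by
  intro i j k l hij hkl
  refine ⟨(σ i j).symm.trans (σ k l), ?_, ?_, ?_⟩
  · rw [FP_eq, ← Finset.coe_image, Finset.coe_inj]
    have : (fun c : Finset (Fin 7) => c.image ⇑((σ i j).symm.trans (σ k l)))
        = (fun c : Finset (Fin 7) => c.image (σ k l)) ∘
          (fun c : Finset (Fin 7) => c.image (σ i j).symm) := by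
      funext c
      simp [Function.comp, Finset.image_image]
    rw [this, ← Finset.image_image, FPF_symm _ (by rw [σ_coe]; exact ftab_FPF i j)]
    rw [σ_coe]; exact ftab_FPF k l
  · have h1 := (ftab_mx i j hij).1
    have h2 := (ftab_mx k l hkl).1
    rw [← σ_coe] at h1 h2
    have : (mx i).image ⇑((σ i j).symm.trans (σ k l)) =
        ((mx i).image (σ i j).symm).image (σ k l) := by
      rw [Finset.image_image]; rfl
    rw [this, ← h1, image_symm_image, h2]
  · have h1 := (ftab_mx i j hij).2
    have h2 := (ftab_mx k l hkl).2
    rw [← σ_coe] at h1 h2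
    have : (mx j).image ⇑((σ i j).symm.trans (σ k l)) =
        ((mx j).image (σ i j).symm).image (σ k l) := by
      rw [Finset.image_image]; rfl
    rw [this, ← h1, image_symm_image, h2]
end

section
/- Let U₁, U₂, U₃ be open convex subsets of ℝ^d forming a sunflower, i.e. code(U₁,U₂,U₃) = {{1,2,3},{1},{2},{3},∅}. Let p₁ ∈ U₁, p₂ ∈ U₂, p₃ ∈ U₃ be points such that p₃ lies on the line segment between p₁ and p₂. Then p₃ ∈ U₁ ∩ U₂ ∩ U₃. -/
set_option maxHeartbeats 1000000 in
/-- If `U₁, U₂, U₃` is a sunflower of convex open sets and `p₃ ∈ U₃` lies on the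
segment between `p₁ ∈ U₁` and `p₂ ∈ U₂`, then `p₃` lies in all three sets. -/
theorem sunflower_collinear
    (d : ℕ) (U : Fin 3 → Set (Fin d → ℝ))
    (hopen : ∀ i, IsOpen (U i)) (hconv : ∀ i, Convex ℝ (U i))
    (hsun : code U = ({{0,1,2}, {0}, {1}, {2}, ∅} : Set (Finset (Fin 3))))
    (p₁ p₂ p₃ : Fin d → ℝ)
    (h1 : p₁ ∈ U 0) (h2 : p₂ ∈ U 1) (h3 : p₃ ∈ U 2)
    (hseg : p₃ ∈ segment ℝ p₁ p₂) :
    p₃ ∈ U 0 ∩ U 1 ∩ U 2 := by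
  classical
  -- every point has a class in the code
  have hclass : ∀ x : Fin d → ℝ, (Finset.univ.filter fun i => x ∈ U i) ∈ code U :=
    fun x => ⟨x, fun i => by simp⟩
  -- a point in two of the sets is in all three
  have htriple : ∀ (x : Fin d → ℝ) (i j : Fin 3), i ≠ j → x ∈ U i → x ∈ U j →
      ∀ k, x ∈ U k := by
    intro x i j hij hxi hxj k
    have hx := hclass x
    rw [hsun] at hx
    simp only [Set.mem_insert_iff, Set.mem_singleton_iff] at hx
    have hi : i ∈ (Finset.univ.filter fun i => x ∈ U i) := by simp [hxi]
    have hj : j ∈ (Finset.univ.filter fun i => x ∈ U i) := by simp [hxj]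
    have hk : k ∈ (Finset.univ.filter fun i => x ∈ U i) := by
      rcases hx with h | h | h | h | h
      · rw [h]; fin_cases k <;> decide
      · rw [h] at hi hj; simp only [Finset.mem_singleton] at hi hj
        exact absurd (hi.trans hj.symm) hij
      · rw [h] at hi hj; simp only [Finset.mem_singleton] at hi hj
        exact absurd (hi.trans hj.symm) hij
      · rw [h] at hi hj; simp only [Finset.mem_singleton] at hi hj
        exact absurd (hi.trans hj.symm) hij
      · rw [h] at hi; exact absurd hi (Finset.notMem_empty i)
    simpa using hk
  -- the center point q
  obtain ⟨q, hqmem⟩ : ({0,1,2} : Finset (Fin 3)) ∈ code U := by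
    rw [hsun]; exact Set.mem_insert _ _
  have hq0 : q ∈ U 0 := (hqmem 0).2 (by decide)
  have hq1 : q ∈ U 1 := (hqmem 1).2 (by decide)
  have hq2 : q ∈ U 2 := (hqmem 2).2 (by decide)
  -- it suffices to prove p₃ ∈ U 0
  suffices h0 : p₃ ∈ U 0 by
    exact ⟨⟨h0, htriple p₃ 0 2 (by decide) h0 h3 1⟩, h3⟩
  by_contra h0
  obtain ⟨a, b, ha, hb, hab, hp⟩ := hseg
  have hbpos : 0 < b := by
    rcases lt_or_eq_of_le hb with h | h
    · exact h
    · exfalso; apply h0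
      have hp1 : a • p₁ + b • p₂ = p₁ := by
        rw [← h, show a = 1 by linarith]; simp
      rw [← hp, hp1]; exact h1
  have hapos : 0 < a := by
    rcases lt_or_eq_of_le ha with h | h
    · exact h
    · exfalso
      have hp2 : p₃ = p₂ := by
        rw [← hp, ← h, show b = 1 by linarith]; simp
      exact h0 (htriple p₃ 1 2 (by decide) (hp2 ▸ h2) h3 0)
  -- the path from p₃ to q
  set x : ℝ → (Fin d → ℝ) := fun s => p₃ + s • (q - p₃) with hxdef
  set A : Set ℝ := {s : ℝ | x s ∈ U 0} with hAdef
  have hAopen : IsOpen A := by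
    have hc : Continuous x := by
      exact continuous_const.add (continuous_id.smul continuous_const)
    exact (hopen 0).preimage hc
  have hAconv : Convex ℝ A := by
    intro s₁ hs₁ s₂ hs₂ u v hu hv huv
    have hmem := hconv 0 hs₁ hs₂ hu hv huv
    have hvid : v = 1 - u := by linarith
    have heq : u • x s₁ + v • x s₂ = x (u • s₁ + v • s₂) := by
      simp only [hxdef, hvid, smul_eq_mul]
      module
    show x (u • s₁ + v • s₂) ∈ U 0
    rw [← heq]; exact hmem
  have h1A : (1 : ℝ) ∈ A := by
    show x 1 ∈ U 0
    have : x 1 = q := by simp [hxdef]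
    rw [this]; exact hq0
  have h0A : (0 : ℝ) ∉ A := by
    show x 0 ∉ U 0
    have : x 0 = p₃ := by simp [hxdef]
    rw [this]; exact h0
  have hApos : ∀ s ∈ A, (0 : ℝ) < s := by
    intro s hs
    by_contra hcon
    push_neg at hcon
    apply h0A
    have : (0 : ℝ) ∈ segment ℝ s 1 := by
      rw [segment_eq_Icc (by linarith : s ≤ 1)]
      exact ⟨hcon, by norm_num⟩
    exact hAconv.segment_subset hs h1A this
  have hAne : A.Nonempty := ⟨1, h1A⟩
  have hAbdd : BddBelow A := ⟨0, fun s hs => (hApos s hs).le⟩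
  set α : ℝ := sInf A with hαdef
  have hα0 : 0 ≤ α := le_csInf hAne fun s hs => (hApos s hs).le
  have hα1 : α < 1 := by
    obtain ⟨ε, hε, hball⟩ := Metric.isOpen_iff.mp hAopen 1 h1A
    have hmem : (1 - ε / 2 : ℝ) ∈ A := by
      apply hball
      rw [Metric.mem_ball, Real.dist_eq, abs_of_nonpos (by linarith)]
      linarith
    have := csInf_le hAbdd hmem
    linarith
  have hαA : α ∉ A := by
    intro hmem
    obtain ⟨ε, hε, hball⟩ := Metric.isOpen_iff.mp hAopen α hmem
    have hmem2 : (α - ε / 2 : ℝ) ∈ A := by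
      apply hball
      rw [Metric.mem_ball, Real.dist_eq, abs_of_nonpos (by linarith)]
      linarith
    have := csInf_le hAbdd hmem2
    linarith
  have hmemA : ∀ s : ℝ, α < s → s ≤ 1 → s ∈ A := by
    intro s hαs hs1
    obtain ⟨c, hcA, hcs⟩ := exists_lt_of_csInf_lt hAne hαs
    have : s ∈ segment ℝ c 1 := by
      rw [segment_eq_Icc (by linarith : c ≤ 1)]
      exact ⟨hcs.le, hs1⟩
    exact hAconv.segment_subset hcA h1A this
  -- points on the path are in U 2
  have hxU2 : ∀ s : ℝ, 0 ≤ s → s ≤ 1 → x s ∈ U 2 := by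
    intro s hs0 hs1
    have hmem := hconv 2 h3 hq2 (by linarith : (0:ℝ) ≤ 1 - s) hs0 (by ring)
    have : (1 - s) • p₃ + s • q = x s := by
      simp only [hxdef]; module
    rw [← this]; exact hmem
  set y : Fin d → ℝ := x α with hydef
  have hy2 : y ∈ U 2 := hxU2 α hα0 hα1.le
  have hy0 : y ∉ U 0 := hαA
  -- separate y from U 0
  obtain ⟨f, hf⟩ := geometric_hahn_banach_open_point (hconv 0) (hopen 0) hy0
  have hfp₁ : f p₁ < f y := hf _ h1
  have hfq : f q < f y := hf _ hq0
  have hfx : ∀ s : ℝ, f (x s) = f p₃ + s * (f q - f p₃) := by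
    intro s
    simp only [hxdef]
    rw [map_add, map_smul, map_sub, smul_eq_mul]
  have hfy : f y = f p₃ + α * (f q - f p₃) := hfx α
  have hfp₃ : f y ≤ f p₃ := by nlinarith [mul_nonneg hα0 (sub_pos.mpr hfq).le]
  have hD : 0 < f p₃ - f q := by linarith
  set D : ℝ := f p₃ - f q with hDdef
  have hfp : f p₃ = a * f p₁ + b * f p₂ := by
    rw [← hp, map_add, map_smul, map_smul, smul_eq_mul, smul_eq_mul]
  have hfp₂ : f y < f p₂ := by
    by_contra hcon
    push_neg at hcon
    have h1' : b * f p₂ ≤ b * f y := mul_le_mul_of_nonneg_left hcon hb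
    have h2' : a * f p₁ < a * f y := (mul_lt_mul_iff_right₀ hapos).2 hfp₁
    have key : a * f y + b * f y = f y := by rw [← add_mul, hab, one_mul]
    linarith [h1', h2', key, hfp, hfp₃]
  set En : ℝ := f p₂ - f y with hEdef
  have hEpos : 0 < En := by simp only [hEdef]; linarith
  -- a ball around y inside U 2
  obtain ⟨r, hr, hball⟩ := Metric.isOpen_iff.mp (hopen 2) y hy2
  set M : ℝ := ‖q - p₃‖ + 2 * D / En * ‖p₂ - y‖ with hMdef
  have hM0 : 0 ≤ M := by positivity
  set δ : ℝ := min (1 - α) (min (En / (2 * D)) (r / (M + 1))) with hδdef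
  have hδpos : 0 < δ := by
    apply lt_min (by linarith)
    exact lt_min (by positivity) (by positivity)
  have hδ1 : δ ≤ 1 - α := min_le_left _ _
  have hδ2 : δ ≤ En / (2 * D) := le_trans (min_le_right _ _) (min_le_left _ _)
  have hδ3 : δ ≤ r / (M + 1) := le_trans (min_le_right _ _) (min_le_right _ _)
  set ν : ℝ := 2 * δ * D / En with hνdef
  have hν0 : 0 ≤ ν := by positivity
  have hν1 : ν ≤ 1 := by
    rw [hνdef, div_le_one hEpos]
    have h2D : (0:ℝ) < 2 * D := by linarith
    calc 2 * δ * D ≤ 2 * (En / (2 * D)) * D := by nlinarith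
    _ = En := by field_simp
  have hνEn : ν * En = 2 * δ * D := by
    rw [hνdef]; field_simp
  clear_value ν
  clear_value δ
  clear_value M
  -- the point x (α + δ)
  have hsA : (α + δ) ∈ A := hmemA _ (by linarith) (by linarith)
  have hxs0 : x (α + δ) ∈ U 0 := hsA
  have hxs2 : x (α + δ) ∈ U 2 := hxU2 _ (by linarith) (by linarith)
  have hxs1 : x (α + δ) ∈ U 1 := htriple _ 0 2 (by decide) hxs0 hxs2 1
  -- the contradiction point z
  set z : Fin d → ℝ := (1 - ν) • x (α + δ) + ν • p₂ with hzdef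
  have hz1 : z ∈ U 1 := hconv 1 hxs1 h2 (by linarith) hν0 (by ring)
  have hzy : z - y = (1 - ν) • (δ • (q - p₃)) + ν • (p₂ - y) := by
    simp only [hzdef, hydef, hxdef]
    module
  have hz2 : z ∈ U 2 := by
    apply hball
    rw [Metric.mem_ball, dist_eq_norm, hzy]
    have hn1 : ‖(1 - ν) • (δ • (q - p₃))‖ = (1 - ν) * (δ * ‖q - p₃‖) := by
      rw [norm_smul, norm_smul, Real.norm_eq_abs, Real.norm_eq_abs,
        abs_of_nonneg (by linarith), abs_of_nonneg hδpos.le]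
    have hn2 : ‖ν • (p₂ - y)‖ = ν * ‖p₂ - y‖ := by
      rw [norm_smul, Real.norm_eq_abs, abs_of_nonneg hν0]
    calc ‖(1 - ν) • (δ • (q - p₃)) + ν • (p₂ - y)‖
        ≤ ‖(1 - ν) • (δ • (q - p₃))‖ + ‖ν • (p₂ - y)‖ := norm_add_le _ _
      _ = (1 - ν) * (δ * ‖q - p₃‖) + ν * ‖p₂ - y‖ := by rw [hn1, hn2]
      _ ≤ δ * ‖q - p₃‖ + ν * ‖p₂ - y‖ := by
          nlinarith [mul_nonneg hν0 (mul_nonneg hδpos.le (norm_nonneg (q - p₃)))]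
      _ = δ * M := by
          rw [hMdef, hνdef]; field_simp
      _ < r := by
          have h1 : δ * (M + 1) ≤ r := by
            rw [← le_div_iff₀ (by positivity)]; exact hδ3
          nlinarith
  -- z is then in U 0, contradicting the separation
  have hz0 : z ∈ U 0 := htriple z 1 2 (by decide) hz1 hz2 0
  have hlt : f z < f y := hf _ hz0
  have hfz : f z = (1 - ν) * f (x (α + δ)) + ν * f p₂ := by
    rw [hzdef, map_add, map_smul, map_smul, smul_eq_mul, smul_eq_mul]
  have hfxs : f (x (α + δ)) = f y - δ * D := by
    rw [hfx, hfy, hDdef]; ring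
  -- f z - f y = δ * D * (1 + ν) > 0
  have : f z - f y = δ * D * (1 + ν) := by
    rw [hfz, hfxs]
    have hEn : f p₂ = f y + En := by rw [hEdef]; ring
    rw [hEn]
    nlinarith [hνEn]
  nlinarith [mul_pos hδpos hD, mul_nonneg (mul_nonneg hδpos.le hD.le) hν0]
end

section
/- Let 𝒞 be a code on n neurons of degree at most two. Then for any index i ∈ [n], the code 𝒞∖i := {c ∖ {i} : c ∈ 𝒞} has degree at most two. -/
/-- `R C σ τ`: every codeword of `C` containing `σ` meets `τ`. -/
def RFholds {n : ℕ} (C : Set (Finset (Fin n))) (σ τ : Finset (Fin n)) : Prop :=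
  ∀ c ∈ C, σ ⊆ c → (c ∩ τ).Nonempty

/-- `(σ, τ)` is an RF relation of `C`. -/
def IsRF {n : ℕ} (C : Set (Finset (Fin n))) (σ τ : Finset (Fin n)) : Prop :=
  Disjoint σ τ ∧ σ ≠ ∅ ∧ RFholds C σ τ

/-- `(σ, τ)` is a minimal RF relation of `C`. -/
def IsMinRF {n : ℕ} (C : Set (Finset (Fin n))) (σ τ : Finset (Fin n)) : Prop :=
  IsRF C σ τ ∧ (∀ i ∈ σ, ¬ RFholds C (σ.erase i) τ) ∧
    (∀ j ∈ τ, ¬ RFholds C σ (τ.erase j))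

/-- `C` has degree at most two: every minimal RF relation has degree `≤ 2`. -/
def DegLeTwo {n : ℕ} (C : Set (Finset (Fin n))) : Prop :=
  ∀ σ τ : Finset (Fin n), IsMinRF C σ τ → σ.card + τ.card ≤ 2

/-- If `i ∈ σ`, the RF condition for the deleted code holds vacuously. -/
lemma rf_vacuous {n : ℕ} (C : Set (Finset (Fin n))) (i : Fin n) (σ τ : Finset (Fin n))
    (hi : i ∈ σ) : RFholds ((fun c => c.erase i) '' C) σ τ := by
  rintro d ⟨c, hc, rfl⟩ hσ
  exact absurd (hσ hi) (Finset.notMem_erase i c)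

/-- Transfer of the RF condition when `i ∉ σ` and `i ∉ τ`. -/
lemma rf_transfer {n : ℕ} (C : Set (Finset (Fin n))) (i : Fin n) (σ τ : Finset (Fin n))
    (hσ : i ∉ σ) (hτ : i ∉ τ) :
    RFholds ((fun c => c.erase i) '' C) σ τ ↔ RFholds C σ τ := by
  constructor
  · intro H c hc hsub
    obtain ⟨x, hx⟩ := H (c.erase i) ⟨c, hc, rfl⟩
      (Finset.subset_erase.mpr ⟨hsub, hσ⟩)
    simp only [Finset.mem_inter, Finset.mem_erase] at hx
    exact ⟨x, Finset.mem_inter.mpr ⟨hx.1.2, hx.2⟩⟩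
  · rintro H d ⟨c, hc, rfl⟩ hsub
    obtain ⟨x, hx⟩ := H c hc (hsub.trans (Finset.erase_subset i c))
    simp only [Finset.mem_inter] at hx
    refine ⟨x, Finset.mem_inter.mpr ⟨Finset.mem_erase.mpr ⟨?_, hx.1⟩, hx.2⟩⟩
    rintro rfl; exact hτ hx.2

/-- Deleting an index from a degree two code yields a code of degree at most two. -/
theorem degLeTwo_delete {n : ℕ} (C : Set (Finset (Fin n)))
    (h : DegLeTwo C) (i : Fin n) :
    DegLeTwo ((fun c => c.erase i) '' C) := by
  intro σ τ hmin
  obtain ⟨⟨hdisj, hne, hrf⟩, hσmin, hτmin⟩ := hmin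
  by_cases hiτ : i ∈ τ
  · -- impossible: τ.erase i works equally well
    exfalso
    apply hτmin i hiτ
    rintro d ⟨c, hc, rfl⟩ hsub
    obtain ⟨x, hx⟩ := hrf (c.erase i) ⟨c, hc, rfl⟩ hsub
    simp only [Finset.mem_inter, Finset.mem_erase] at hx
    exact ⟨x, Finset.mem_inter.mpr ⟨Finset.mem_erase.mpr ⟨hx.1.1, hx.1.2⟩,
      Finset.mem_erase.mpr ⟨hx.1.1, hx.2⟩⟩⟩
  by_cases hiσ : i ∈ σ
  · -- then σ = {i} and τ = ∅
    have hσeq : σ = {i} := by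
      by_contra hne'
      obtain ⟨k, hk, hki⟩ : ∃ k ∈ σ, k ≠ i := by
        by_contra hcon
        push_neg at hcon
        exact hne' (Finset.eq_singleton_iff_unique_mem.mpr ⟨hiσ, fun k hk => hcon k hk⟩)
      exact hσmin k hk (rf_vacuous C i (σ.erase k) τ (Finset.mem_erase.mpr ⟨Ne.symm hki, hiσ⟩))
    have hτeq : τ = ∅ := by
      by_contra hτne
      obtain ⟨j, hj⟩ := Finset.nonempty_iff_ne_empty.mpr hτne
      exact hτmin j hj (rf_vacuous C i σ (τ.erase j) hiσ)
    simp [hσeq, hτeq]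
  · -- transfer minimality to C
    apply h σ τ
    refine ⟨⟨hdisj, hne, (rf_transfer C i σ τ hiσ hiτ).mp hrf⟩, ?_, ?_⟩
    · intro k hk H
      exact hσmin k hk ((rf_transfer C i (σ.erase k) τ
        (fun hmem => hiσ (Finset.mem_of_mem_erase hmem)) hiτ).mpr H)
    · intro j hj H
      exact hτmin j hj ((rf_transfer C i σ (τ.erase j) hiσ
        (fun hmem => hiτ (Finset.mem_of_mem_erase hmem))).mpr H)
end

section
/- Let 𝒞 be a code on n neurons of degree at most two with ∅ ∈ 𝒞, in which every index of [n] appears in some codeword, and suppose the index n is inclusion minimal in 𝒞. Define σ = {i ∈ [n−1] : ({n},{i}) is an RF relation of 𝒞} and τ = {i ∈ [n−1] : ({i,n}, ∅) is NOT an RF relation of 𝒞}. Given any realization 𝒰 = (U₁,…,U_{n−1}) of 𝒞∖n := {c ∖ {n} : c ∈ 𝒞} by (arbitrary) subsets of ℝ^d, the collection 𝒱 = (V₁,…,Vₙ) of subsets of ℝ^{d+1} = ℝ^d × ℝ defined by V_i = U_i × [0,1] for i ∈ [n−1] ∖ τ, V_i = U_i × [0,3] for i ∈ τ, and V_n = (⋂_{j∈σ}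 U_j) × [2,3] (where the intersection over σ = ∅ is all of ℝ^d), satisfies code(𝒱) = 𝒞. -/
open Classical

/-- Every RF relation contains a minimal one (given `∅ ∈ C`). -/
lemma exists_min_sub {m : ℕ} (C : Set (Finset (Fin m))) (hempty : ∅ ∈ C) :
    ∀ k (σ τ : Finset (Fin m)), σ.card + τ.card ≤ k → Disjoint σ τ → σ ≠ ∅ →
      RFholds C σ τ → ∃ σ' τ', σ' ⊆ σ ∧ τ' ⊆ τ ∧ IsMinRF C σ' τ' := by
  intro k
  induction k with
  | zero =>
    intro σ τ hc hd hne h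
    exact absurd (Finset.card_eq_zero.mp (by omega)) hne
  | succ k ih =>
    intro σ τ hc hd hne h
    by_cases h1 : ∃ i ∈ σ, RFholds C (σ.erase i) τ
    · obtain ⟨i, hi, hri⟩ := h1
      have hne' : σ.erase i ≠ ∅ := by
        intro he
        obtain ⟨x, hx⟩ := hri ∅ hempty (by simp [he])
        simp at hx
      have hcard := Finset.card_erase_of_mem hi
      have hipos := Finset.card_pos.mpr ⟨i, hi⟩
      obtain ⟨σ', τ', hs1, hs2, hs3⟩ := ih (σ.erase i) τ (by omega)
        (Finset.disjoint_of_subset_left (Finset.erase_subset _ _) hd) hne' hri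
      exact ⟨σ', τ', hs1.trans (Finset.erase_subset _ _), hs2, hs3⟩
    · by_cases h2 : ∃ j ∈ τ, RFholds C σ (τ.erase j)
      · obtain ⟨j, hj, hrj⟩ := h2
        have hcard := Finset.card_erase_of_mem hj
        have hjpos := Finset.card_pos.mpr ⟨j, hj⟩
        obtain ⟨σ', τ', hs1, hs2, hs3⟩ := ih σ (τ.erase j) (by omega)
          (Finset.disjoint_of_subset_right (Finset.erase_subset _ _) hd) hne hrj
        exact ⟨σ', τ', hs1, hs2.trans (Finset.erase_subset _ _), hs3⟩
      · push_neg at h1 h2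
        exact ⟨σ, τ, subset_rfl, subset_rfl, ⟨hd, hne, h⟩, h1, h2⟩

/-- Membership criterion for degree-two codes. -/
lemma mem_of_deg_two {m : ℕ} (C : Set (Finset (Fin m))) (hdeg : DegLeTwo C)
    (hempty : ∅ ∈ C) (hsupp : ∀ i, ∃ c ∈ C, i ∈ c) (c : Finset (Fin m))
    (h1 : ∀ i ∈ c, ∀ j ∉ c, ¬ RFholds C {i} {j})
    (h2 : ∀ i ∈ c, ∀ j ∈ c, i ≠ j → ¬ RFholds C {i, j} ∅) : c ∈ C := by
  by_cases hce : c = ∅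
  · exact hce ▸ hempty
  by_contra hc
  have hR : RFholds C c cᶜ := by
    intro d hd hsub
    rcases Finset.eq_empty_or_nonempty (d ∩ cᶜ) with he | hne
    · have hdc : d ⊆ c := by
        intro x hx
        by_contra hxc
        have : x ∈ d ∩ cᶜ := by simp [hx, hxc]
        simp [he] at this
      exact absurd ((Finset.Subset.antisymm hdc hsub) ▸ hd) hc
    · exact hne
  obtain ⟨σ', τ', hσs, hτs, hmin⟩ := exists_min_sub C hempty (c.card + cᶜ.card) c cᶜ
    le_rfl (disjoint_compl_right) hce hR
  have hcard := hdeg _ _ hmin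
  obtain ⟨⟨hdisj, hne', hRF⟩, -, -⟩ := hmin
  have hσpos := Finset.card_pos.mpr (Finset.nonempty_iff_ne_empty.mpr hne')
  rcases (by omega : σ'.card = 1 ∧ τ'.card = 0 ∨ σ'.card = 1 ∧ τ'.card = 1 ∨
      σ'.card = 2 ∧ τ'.card = 0) with ⟨hs, ht⟩ | ⟨hs, ht⟩ | ⟨hs, ht⟩
  · obtain ⟨i, rfl⟩ := Finset.card_eq_one.mp hs
    obtain ⟨d, hd, hid⟩ := hsupp i
    obtain ⟨x, hx⟩ := hRF d hd (Finset.singleton_subset_iff.mpr hid)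
    rw [Finset.card_eq_zero.mp ht] at hx
    simp at hx
  · obtain ⟨i, rfl⟩ := Finset.card_eq_one.mp hs
    obtain ⟨j, rfl⟩ := Finset.card_eq_one.mp ht
    exact h1 i (hσs (Finset.mem_singleton_self i))
      j (by simpa using hτs (Finset.mem_singleton_self j)) hRF
  · obtain ⟨i, j, hij, rfl⟩ := Finset.card_eq_two.mp hs
    rw [Finset.card_eq_zero.mp ht] at hRF
    exact h2 i (hσs (by simp)) j (hσs (by simp)) hij hRF

/-- Extending a realization of `C ∖ n` in `ℝ^d` to a realization of `C` in
`ℝ^{d+1} = ℝ^d × ℝ`, when `C` is a degree two code (on `n+1` neurons) whose last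
index is inclusion minimal. Indices `i` with `({i, n}, ∅)` not an RF relation
(the set `τ`) get the interval `[0,3]`; the other old indices get `[0,1]`; the
new set is `(⋂_{j ∈ σ} U_j) × [2,3]` where `σ` is the set of indices `i` with
`({n}, {i})` an RF relation. -/
theorem extend_realization_degree_two {n d : ℕ}
    (C : Set (Finset (Fin (n + 1))))
    (hdeg : DegLeTwo C) (hempty : ∅ ∈ C)
    (hsupp : ∀ i : Fin (n + 1), ∃ c ∈ C, i ∈ c)
    (hmin : ∀ j : Fin (n + 1), j ≠ Fin.last n → ¬ IsRF C {j} {Fin.last n})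
    (U : Fin n → Set (Fin d → ℝ))
    (hU : (fun s : Finset (Fin n) => s.image Fin.castSucc) '' code U
        = (fun c : Finset (Fin (n + 1)) => c.erase (Fin.last n)) '' C) :
    code (Fin.snoc
      (fun i : Fin n =>
        U i ×ˢ Set.Icc (0 : ℝ)
          (if ¬ IsRF C {Fin.castSucc i, Fin.last n} ∅ then 3 else 1))
      ((⋂ j ∈ {i : Fin n | IsRF C {Fin.last n} {Fin.castSucc i}}, U j)
        ×ˢ Set.Icc (2 : ℝ) 3)
      : Fin (n + 1) → Set ((Fin d → ℝ) × ℝ)) = C := by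
  classical
  have hcne : ∀ i : Fin n, Fin.castSucc i ≠ Fin.last n := fun i => (Fin.castSucc_lt_last i).ne
  have htauR : ∀ i : Fin n, ¬ RFholds C {Fin.castSucc i, Fin.last n} ∅ ↔
      ∃ c ∈ C, Fin.castSucc i ∈ c ∧ Fin.last n ∈ c := by
    intro i
    unfold RFholds
    push_neg
    simp [Finset.insert_subset_iff]
  have htauIff : ∀ i : Fin n, (¬ IsRF C {Fin.castSucc i, Fin.last n} ∅) ↔
      ∃ c ∈ C, Fin.castSucc i ∈ c ∧ Fin.last n ∈ c := by
    intro i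
    rw [← htauR i]
    constructor
    · intro h hR; exact h ⟨Finset.disjoint_empty_right _, by simp, hR⟩
    · intro h h2; exact h h2.2.2
  have hsigIff : ∀ j : Fin n, IsRF C {Fin.last n} {Fin.castSucc j} ↔
      RFholds C {Fin.last n} {Fin.castSucc j} :=
    fun j => ⟨fun h => h.2.2,
      fun h => ⟨Finset.disjoint_singleton.mpr (hcne j).symm, by simp, h⟩⟩
  have hcode : ∀ p : Fin d → ℝ, ∃ c₀ ∈ C, ∀ i : Fin n, (Fin.castSucc i ∈ c₀ ↔ p ∈ U i) := by
    intro p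
    have hs : (Finset.univ.filter (fun i => p ∈ U i)) ∈ code U := ⟨p, fun i => by simp⟩
    have hmem : (Finset.univ.filter (fun i => p ∈ U i)).image Fin.castSucc ∈
        (fun c : Finset (Fin (n+1)) => c.erase (Fin.last n)) '' C := by
      rw [← hU]; exact ⟨_, hs, rfl⟩
    obtain ⟨c₀, hc₀, hce⟩ := hmem
    dsimp only at hce
    refine ⟨c₀, hc₀, fun i => ?_⟩
    constructor
    · intro h
      have h2 : Fin.castSucc i ∈ c₀.erase (Fin.last n) := Finset.mem_erase.mpr ⟨hcne i, h⟩
      rw [hce] at h2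
      obtain ⟨a, ha, hae⟩ := Finset.mem_image.mp h2
      rw [Finset.mem_filter] at ha
      exact (Fin.castSucc_injective n hae) ▸ ha.2
    · intro h
      have h2 : Fin.castSucc i ∈ c₀.erase (Fin.last n) := by
        rw [hce]; exact Finset.mem_image_of_mem _ (by simp [h])
      exact (Finset.mem_erase.mp h2).2
  have hreal : ∀ c ∈ C, ∃ p : Fin d → ℝ, ∀ i : Fin n, (p ∈ U i ↔ Fin.castSucc i ∈ c) := by
    intro c hc
    have hmem : c.erase (Fin.last n) ∈
        (fun s : Finset (Fin n) => s.image Fin.castSucc) '' code U := by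
      rw [hU]; exact ⟨c, hc, rfl⟩
    obtain ⟨s, ⟨p, hp⟩, hse⟩ := hmem
    dsimp only at hse
    refine ⟨p, fun i => ?_⟩
    rw [hp i]
    constructor
    · intro h
      have h2 : Fin.castSucc i ∈ s.image Fin.castSucc := Finset.mem_image_of_mem _ h
      rw [hse] at h2
      exact (Finset.mem_erase.mp h2).2
    · intro h
      have h2 : Fin.castSucc i ∈ s.image Fin.castSucc := by
        rw [hse]; exact Finset.mem_erase.mpr ⟨hcne i, h⟩
      obtain ⟨a, ha, hae⟩ := Finset.mem_image.mp h2
      exact (Fin.castSucc_injective n hae) ▸ ha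
  apply Set.ext
  intro w
  constructor
  · rintro ⟨⟨p, t⟩, hp⟩
    obtain ⟨c₀, hc₀, hc₀m⟩ := hcode p
    have hOld : ∀ i : Fin n, Fin.castSucc i ∈ w ↔
        p ∈ U i ∧ 0 ≤ t ∧ t ≤ (if ¬ IsRF C {Fin.castSucc i, Fin.last n} ∅
          then (3 : ℝ) else 1) := by
      intro i
      rw [← hp (Fin.castSucc i), Fin.snoc_castSucc]
      simp [Set.mem_prod, Set.mem_Icc, and_assoc]
    have hNew : (Fin.last n ∈ w) ↔
        (∀ j : Fin n, RFholds C {Fin.last n} {Fin.castSucc j} → p ∈ U j) ∧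
          2 ≤ t ∧ t ≤ 3 := by
      rw [← hp (Fin.last n), Fin.snoc_last]
      simp [Set.mem_prod, Set.mem_Icc, Set.mem_iInter, Set.mem_setOf_eq, hsigIff, and_assoc]
    have hbig : ∀ i : Fin n, Fin.castSucc i ∈ w → 1 < t →
        ∃ c₁ ∈ C, Fin.castSucc i ∈ c₁ ∧ Fin.last n ∈ c₁ := by
      intro i hi ht
      obtain ⟨hpU, ht0, hti⟩ := (hOld i).mp hi
      by_cases hIs : IsRF C {Fin.castSucc i, Fin.last n} ∅
      · rw [if_neg (not_not_intro hIs)] at hti; linarith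
      · exact (htauIff i).mp hIs
    have hnotmem : ∀ j : Fin n, Fin.castSucc j ∉ w → 0 ≤ t → t ≤ 3 → p ∈ U j →
        1 < t ∧ RFholds C {Fin.castSucc j, Fin.last n} ∅ := by
      intro j hj ht0 ht3 hpU
      rw [hOld j] at hj
      push_neg at hj
      have hlt := hj hpU ht0
      by_cases hIs : IsRF C {Fin.castSucc j, Fin.last n} ∅
      · rw [if_neg (not_not_intro hIs)] at hlt
        exact ⟨hlt, hIs.2.2⟩
      · rw [if_pos hIs] at hlt; linarith
    refine mem_of_deg_two C hdeg hempty hsupp w ?_ ?_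
    · intro k hk j hj hRF
      rcases Fin.eq_castSucc_or_eq_last j with ⟨j', rfl⟩ | rfl
      · rcases Fin.eq_castSucc_or_eq_last k with ⟨i, rfl⟩ | rfl
        · obtain ⟨hpUi, ht0, hti⟩ := (hOld i).mp hk
          have ht3 : t ≤ 3 := by
            refine hti.trans ?_
            split <;> norm_num
          by_cases hpUj : p ∈ U j'
          · obtain ⟨ht1, hRj⟩ := hnotmem j' hj ht0 ht3 hpUj
            obtain ⟨c₁, hc₁, hic₁, hLc₁⟩ := hbig i hk ht1
            have hjc₁ : Fin.castSucc j' ∉ c₁ :=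
              fun hmem => (htauR j').mpr ⟨c₁, hc₁, hmem, hLc₁⟩ hRj
            obtain ⟨x, hx⟩ := hRF c₁ hc₁ (Finset.singleton_subset_iff.mpr hic₁)
            rw [Finset.mem_inter, Finset.mem_singleton] at hx
            exact hjc₁ (hx.2 ▸ hx.1)
          · have hic₀ : Fin.castSucc i ∈ c₀ := (hc₀m i).mpr hpUi
            have hjc₀ : Fin.castSucc j' ∉ c₀ := fun h => hpUj ((hc₀m j').mp h)
            obtain ⟨x, hx⟩ := hRF c₀ hc₀ (Finset.singleton_subset_iff.mpr hic₀)
            rw [Finset.mem_inter, Finset.mem_singleton] at hx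
            exact hjc₀ (hx.2 ▸ hx.1)
        · obtain ⟨hσ, ht2, ht3⟩ := hNew.mp hk
          obtain ⟨cL, hcL, hLcL⟩ := hsupp (Fin.last n)
          obtain ⟨x, hx⟩ := hRF cL hcL (Finset.singleton_subset_iff.mpr hLcL)
          rw [Finset.mem_inter, Finset.mem_singleton] at hx
          have hjcL : Fin.castSucc j' ∈ cL := hx.2 ▸ hx.1
          obtain ⟨-, hRj⟩ := hnotmem j' hj (by linarith) ht3 (hσ j' hRF)
          exact (htauR j').mpr ⟨cL, hcL, hjcL, hLcL⟩ hRj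
      · have hkne : k ≠ Fin.last n := fun h => hj (h ▸ hk)
        exact hmin k hkne ⟨Finset.disjoint_singleton.mpr hkne, by simp, hRF⟩
    · intro k hk k' hk' hkk' hRF
      have key : ∃ c₁ ∈ C, k ∈ c₁ ∧ k' ∈ c₁ := by
        rcases Fin.eq_castSucc_or_eq_last k with ⟨i, rfl⟩ | rfl
        · rcases Fin.eq_castSucc_or_eq_last k' with ⟨j, rfl⟩ | rfl
          · obtain ⟨hpUi, -, -⟩ := (hOld i).mp hk
            obtain ⟨hpUj, -, -⟩ := (hOld j).mp hk'
            exact ⟨c₀, hc₀, (hc₀m i).mpr hpUi, (hc₀m j).mpr hpUj⟩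
          · obtain ⟨-, ht2, -⟩ := hNew.mp hk'
            obtain ⟨c₁, hc₁, h1, h2⟩ := hbig i hk (by linarith)
            exact ⟨c₁, hc₁, h1, h2⟩
        · rcases Fin.eq_castSucc_or_eq_last k' with ⟨j, rfl⟩ | rfl
          · obtain ⟨-, ht2, -⟩ := hNew.mp hk
            obtain ⟨c₁, hc₁, h1, h2⟩ := hbig j hk' (by linarith)
            exact ⟨c₁, hc₁, h2, h1⟩
          · exact absurd rfl hkk'
      obtain ⟨c₁, hc₁, h1, h2⟩ := key
      obtain ⟨x, hx⟩ := hRF c₁ hc₁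
        (by rw [Finset.insert_subset_iff]; exact ⟨h1, Finset.singleton_subset_iff.mpr h2⟩)
      simp at hx
  · intro hc
    obtain ⟨p, hp⟩ := hreal w hc
    by_cases hLw : Fin.last n ∈ w
    · refine ⟨(p, 3), fun k => ?_⟩
      rcases Fin.eq_castSucc_or_eq_last k with ⟨i, rfl⟩ | rfl
      · rw [Fin.snoc_castSucc]
        simp only [Set.mem_prod, Set.mem_Icc]
        constructor
        · rintro ⟨hpU, -⟩
          exact (hp i).mp hpU
        · intro hi
          have hIs : ¬ IsRF C {Fin.castSucc i, Fin.last n} ∅ := (htauIff i).mpr ⟨w, hc, hi, hLw⟩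
          rw [if_pos hIs]
          exact ⟨(hp i).mpr hi, by norm_num, by norm_num⟩
      · rw [Fin.snoc_last]
        simp only [Set.mem_prod, Set.mem_Icc, Set.mem_iInter]
        constructor
        · intro _; exact hLw
        · intro _
          refine ⟨fun j hj => ?_, by norm_num, by norm_num⟩
          have hR := (hsigIff j).mp hj
          obtain ⟨x, hx⟩ := hR w hc (Finset.singleton_subset_iff.mpr hLw)
          rw [Finset.mem_inter, Finset.mem_singleton] at hx
          exact (hp j).mpr (hx.2 ▸ hx.1)
    · refine ⟨(p, 0), fun k => ?_⟩
      rcases Fin.eq_castSucc_or_eq_last k with ⟨i, rfl⟩ | rfl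
      · rw [Fin.snoc_castSucc]
        simp only [Set.mem_prod, Set.mem_Icc]
        constructor
        · rintro ⟨hpU, -⟩
          exact (hp i).mp hpU
        · intro hi
          refine ⟨(hp i).mpr hi, le_refl 0, ?_⟩
          split <;> norm_num
      · rw [Fin.snoc_last]
        simp only [Set.mem_prod, Set.mem_Icc]
        constructor
        · rintro ⟨-, h2, -⟩
          norm_num at h2
        · intro h
          exact absurd h hLw
end

section
/- Let 𝒞 be a code on n neurons (n ≥ 1) of degree at most two with ∅ ∈ 𝒞. Then 𝒞 can be realized by axis-parallel boxes in dimension max{1, n−1}: there exist real numbers a_{i,j} and b_{i,j} for i ∈ [n] and j ∈ [max{1,n−1}] such that, setting U_i = ∏_{j=1}^{max{1,n−1}} [a_{i,j}, b_{i,j}] ⊆ ℝ^{max{1,n−1}} (the box being empty if a_{i,j} > b_{i,j} for some j), one has code(U₁,…,Uₙ) = 𝒞. -/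
def aliveN {n : ℕ} (C : Set (Finset (Fin n))) (i : Fin n) : Prop := ∃ c ∈ C, i ∈ c

def leR {n : ℕ} (C : Set (Finset (Fin n))) (i j : Fin n) : Prop := RFholds C {i} {j}

def exR {n : ℕ} (C : Set (Finset (Fin n))) (i j : Fin n) : Prop := RFholds C {i, j} ∅

lemma mem_of_leR {n : ℕ} {C : Set (Finset (Fin n))} {i j : Fin n} {c : Finset (Fin n)}
    (h : leR C i j) (hc : c ∈ C) (hi : i ∈ c) : j ∈ c := by
  obtain ⟨x, hx⟩ := h c hc (Finset.singleton_subset_iff.2 hi)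
  rw [Finset.mem_inter, Finset.mem_singleton] at hx
  exact hx.2 ▸ hx.1

lemma leR_refl {n : ℕ} {C : Set (Finset (Fin n))} (i : Fin n) : leR C i i := fun c _ h =>
  ⟨i, Finset.mem_inter.2 ⟨h (Finset.mem_singleton_self i), Finset.mem_singleton_self i⟩⟩

lemma leR_trans {n : ℕ} {C : Set (Finset (Fin n))} {i j k : Fin n}
    (h1 : leR C i j) (h2 : leR C j k) : leR C i k := by
  intro c hc hsub
  exact h2 c hc (Finset.singleton_subset_iff.2
    (mem_of_leR h1 hc (hsub (Finset.mem_singleton_self i))))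

lemma exR_elim {n : ℕ} {C : Set (Finset (Fin n))} {q i : Fin n} {c : Finset (Fin n)}
    (hex : exR C q i) (hc : c ∈ C) (hq : q ∈ c) (hi : i ∈ c) : False := by
  obtain ⟨z, hz⟩ := hex c hc (by
    intro t ht
    rw [Finset.mem_insert, Finset.mem_singleton] at ht
    rcases ht with rfl | rfl
    exacts [hq, hi])
  simp at hz

def Good {n : ℕ} (C : Set (Finset (Fin n))) (σ : Finset (Fin n)) : Prop :=
  (∀ i ∈ σ, aliveN C i) ∧ (∀ i ∈ σ, ∀ j, leR C i j → j ∈ σ) ∧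
    (∀ i ∈ σ, ∀ k ∈ σ, i ≠ k → ¬ exR C i k)

lemma good_of_mem {n : ℕ} {C : Set (Finset (Fin n))} {σ : Finset (Fin n)}
    (hσ : σ ∈ C) : Good C σ := by
  refine ⟨fun i hi => ⟨σ, hσ, hi⟩, fun i hi j hle => mem_of_leR hle hσ hi, ?_⟩
  intro i hi k hk _ hex
  exact exR_elim hex hσ hi hk

lemma mem_of_good {n : ℕ} {C : Set (Finset (Fin n))} (hdeg : DegLeTwo C) (hempty : ∅ ∈ C)
    {σ : Finset (Fin n)} (hg : Good C σ) : σ ∈ C := by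
  classical
  by_contra hσ
  have hP : ∃ k : ℕ, ∃ x : Finset (Fin n) × Finset (Fin n),
      (x.1 ⊆ σ ∧ Disjoint x.2 σ ∧ RFholds C x.1 x.2) ∧ x.1.card + x.2.card = k := by
    refine ⟨_, (σ, σᶜ), ⟨subset_rfl, disjoint_compl_left, ?_⟩, rfl⟩
    intro c hc hsub
    by_contra h
    rw [Finset.not_nonempty_iff_eq_empty] at h
    have hcσ : c ⊆ σ := by
      intro t ht
      by_contra htσ
      have : t ∈ c ∩ σᶜ := Finset.mem_inter.2 ⟨ht, Finset.mem_compl.2 htσ⟩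
      simp [h] at this
    exact hσ ((Finset.Subset.antisymm hcσ hsub) ▸ hc)
  obtain ⟨x, ⟨hx1, hx2, hx3⟩, hxk⟩ := Nat.find_spec hP
  have hmin : ∀ y : Finset (Fin n) × Finset (Fin n), y.1 ⊆ σ → Disjoint y.2 σ →
      RFholds C y.1 y.2 → Nat.find hP ≤ y.1.card + y.2.card := by
    intro y h1 h2 h3
    exact Nat.find_le ⟨y, ⟨h1, h2, h3⟩, rfl⟩
  have hne : x.1 ≠ ∅ := by
    intro h
    rw [h] at hx3
    obtain ⟨z, hz⟩ := hx3 ∅ hempty (Finset.empty_subset _)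
    simp at hz
  have hdisj : Disjoint x.1 x.2 := by
    rw [Finset.disjoint_left]
    intro t ht ht2
    exact (Finset.disjoint_left.1 hx2) ht2 (hx1 ht)
  have hminRF : IsMinRF C x.1 x.2 := by
    refine ⟨⟨hdisj, hne, hx3⟩, ?_, ?_⟩
    · intro i hi hR
      have h1 := hmin (x.1.erase i, x.2) ((Finset.erase_subset i x.1).trans hx1) hx2 hR
      have h2 : (x.1.erase i).card < x.1.card := Finset.card_erase_lt_of_mem hi
      simp only at h1
      omega
    · intro j hj hR
      have h1 := hmin (x.1, x.2.erase j) hx1 (hx2.mono_left (Finset.erase_subset j x.2)) hR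
      have h2 : (x.2.erase j).card < x.2.card := Finset.card_erase_lt_of_mem hj
      simp only at h1
      omega
  have hcard := hdeg _ _ hminRF
  have hc1 : 0 < x.1.card := Finset.card_pos.2 (Finset.nonempty_of_ne_empty hne)
  by_cases h1 : x.1.card = 1
  · obtain ⟨i, hi⟩ := Finset.card_eq_one.1 h1
    rw [hi] at hx1 hx3
    have hiσ : i ∈ σ := hx1 (Finset.mem_singleton_self i)
    by_cases h2 : x.2.card = 0
    · rw [Finset.card_eq_zero] at h2
      rw [h2] at hx3
      obtain ⟨c, hc, hic⟩ := hg.1 i hiσ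
      obtain ⟨z, hz⟩ := hx3 c hc (Finset.singleton_subset_iff.2 hic)
      simp at hz
    · have h2' : x.2.card = 1 := by omega
      obtain ⟨j, hj⟩ := Finset.card_eq_one.1 h2'
      rw [hj] at hx2 hx3
      have hjσ : j ∈ σ := hg.2.1 i hiσ j hx3
      exact (Finset.disjoint_left.1 hx2) (Finset.mem_singleton_self j) hjσ
  · have h1' : x.1.card = 2 := by omega
    have h2 : x.2 = ∅ := by rw [← Finset.card_eq_zero]; omega
    obtain ⟨i, k, hik, hx⟩ := Finset.card_eq_two.1 h1'
    rw [hx] at hx1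
    rw [hx, h2] at hx3
    exact hg.2.2 i (hx1 (by simp)) k (hx1 (by simp)) hik hx3

open Classical in
noncomputable def boxA {n : ℕ} (C : Set (Finset (Fin n))) (q L i : Fin n) : ℝ :=
  if aliveN C i then (if i ≠ q ∧ exR C q i then 4 else if leR C i L then 2 else 1) else 1

open Classical in
noncomputable def boxB {n : ℕ} (C : Set (Finset (Fin n))) (q L i : Fin n) : ℝ :=
  if aliveN C i then
    (if i ≠ q ∧ exR C q i then (if leR C i L then 4 else 5)
     else if leR C i q then 2 else if leR C i L then 4 else 5)
  else 0

lemma alive_of_leR {n : ℕ} {C : Set (Finset (Fin n))} {i m : Fin n}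
    (hle : leR C i m) (hia : aliveN C i) : aliveN C m := by
  obtain ⟨c, hc, hic⟩ := hia
  exact ⟨c, hc, mem_of_leR hle hc hic⟩

lemma B_mono {n : ℕ} {C : Set (Finset (Fin n))} {q i m : Fin n}
    (hle : leR C i m) (hia : aliveN C i) (h : m ≠ q ∧ exR C q m) : i ≠ q ∧ exR C q i := by
  obtain ⟨hmq, hex⟩ := h
  constructor
  · rintro rfl
    obtain ⟨c, hc, hic⟩ := hia
    exact exR_elim hex hc hic (mem_of_leR hle hc hic)
  · intro c hc hsub
    exact (exR_elim hex hc (hsub (Finset.mem_insert_self q {i}))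
      (mem_of_leR hle hc (hsub (Finset.mem_insert_of_mem (Finset.mem_singleton_self i))))).elim

lemma BD_absurd {n : ℕ} {C : Set (Finset (Fin n))} {q i : Fin n}
    (hia : aliveN C i) (hB : i ≠ q ∧ exR C q i) (hD : leR C i q) : False := by
  obtain ⟨c, hc, hic⟩ := hia
  exact exR_elim hB.2 hc (mem_of_leR hD hc hic) hic

set_option maxHeartbeats 1000000 in
lemma boxA_mono {n : ℕ} {C : Set (Finset (Fin n))} {q L i m : Fin n}
    (hle : leR C i m) (hia : aliveN C i) : boxA C q L m ≤ boxA C q L i := by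
  have hma := alive_of_leR hle hia
  have hB : (m ≠ q ∧ exR C q m) → (i ≠ q ∧ exR C q i) := B_mono hle hia
  have hN : leR C m L → leR C i L := fun h => leR_trans hle h
  unfold boxA
  split_ifs <;> try norm_num
  all_goals tauto

set_option maxHeartbeats 2000000 in
lemma boxB_mono {n : ℕ} {C : Set (Finset (Fin n))} {q L i m : Fin n}
    (hle : leR C i m) (hia : aliveN C i) : boxB C q L i ≤ boxB C q L m := by
  have hma := alive_of_leR hle hia
  have hB : (m ≠ q ∧ exR C q m) → (i ≠ q ∧ exR C q i) := B_mono hle hia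
  have hN : leR C m L → leR C i L := fun h => leR_trans hle h
  have hD : leR C m q → leR C i q := fun h => leR_trans hle h
  have hBD : ¬ ((i ≠ q ∧ exR C q i) ∧ leR C i q) := fun h => BD_absurd hia h.1 h.2
  unfold boxB
  split_ifs <;> try norm_num
  all_goals tauto

/-- A degree two code on `n ≥ 1` neurons can be realized by axis-parallel
boxes in dimension `max 1 (n - 1)`. -/
theorem degree_two_code_realized_by_boxes {n : ℕ} (hn : 1 ≤ n)
    (C : Set (Finset (Fin n))) (hdeg : DegLeTwo C) (hempty : ∅ ∈ C) :
    ∃ a b : Fin n → Fin (max 1 (n - 1)) → ℝ,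
      code (fun i => Set.univ.pi fun j => Set.Icc (a i j) (b i j)) = C := by
  classical
  have hd : 0 < max 1 (n - 1) := lt_of_lt_of_le Nat.zero_lt_one (le_max_left _ _)
  have hlstlt : n - 1 < n := by omega
  set lst : Fin n := ⟨n - 1, hlstlt⟩ with hlst
  have hιlt : ∀ j : Fin (max 1 (n - 1)), min j.val (n - 1) < n :=
    fun j => lt_of_le_of_lt (Nat.min_le_right _ _) hlstlt
  set ι : Fin (max 1 (n - 1)) → Fin n := fun j => ⟨min j.val (n - 1), hιlt j⟩ with hιdef
  have hιval : ∀ (i : Fin n) (h : i.val < max 1 (n - 1)), ι ⟨i.val, h⟩ = i := by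
    intro i h
    apply Fin.ext
    simp only [hιdef]
    exact Nat.min_eq_left (by omega)
  have hival : ∀ i : Fin n, i ≠ lst → i.val < max 1 (n - 1) := by
    intro i h
    have h2 : i.val ≠ n - 1 := fun hh => h (Fin.ext hh)
    have h3 : n - 1 ≤ max 1 (n - 1) := le_max_right _ _
    have h4 := i.isLt
    omega
  refine ⟨fun i j => boxA C (ι j) lst i, fun i j => boxB C (ι j) lst i, ?_⟩
  ext σ
  simp only [code, Set.mem_setOf_eq, Set.mem_pi, Set.mem_univ, forall_true_left, Set.mem_Icc]
  constructor
  · rintro ⟨p, hp⟩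
    apply mem_of_good hdeg hempty
    have halive : ∀ i ∈ σ, aliveN C i := by
      intro i hi
      by_contra h
      have h0 := (hp i).2 hi ⟨0, hd⟩
      simp only [boxA, boxB, if_neg h] at h0
      linarith [h0.1, h0.2]
    refine ⟨halive, ?_, ?_⟩
    · intro i hi m hle
      refine (hp m).1 (fun j => ?_)
      have h0 := (hp i).2 hi j
      exact ⟨le_trans (boxA_mono hle (halive i hi)) h0.1,
        le_trans h0.2 (boxB_mono hle (halive i hi))⟩
    · have key : ∀ i k : Fin n, i ≠ lst → i ≠ k → aliveN C i → aliveN C k → exR C i k →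
          (∀ j, boxA C (ι j) lst i ≤ p j ∧ p j ≤ boxB C (ι j) lst i) →
          (∀ j, boxA C (ι j) lst k ≤ p j ∧ p j ≤ boxB C (ι j) lst k) → False := by
        intro i k hil hik hia hka hex hpi hpk
        have h1 := hpi ⟨i.val, hival i hil⟩
        have h2 := hpk ⟨i.val, hival i hil⟩
        rw [hιval i (hival i hil)] at h1 h2
        have hbi : boxB C i lst i = 2 := by
          simp only [boxB]
          rw [if_pos hia, if_neg (by simp), if_pos (leR_refl i)]
        have hak : boxA C i lst k = 4 := by
          simp only [boxA]
          rw [if_pos hka, if_pos ⟨Ne.symm hik, hex⟩]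
        rw [hbi] at h1
        rw [hak] at h2
        linarith [h1.2, h2.1]
      intro i hi k hk hik hex
      by_cases hil : i = lst
      · have hkl : k ≠ lst := fun h => hik (by rw [hil, h])
        have hex' : exR C k i := by
          unfold exR
          rw [Finset.pair_comm]
          exact hex
        exact key k i hkl (Ne.symm hik) (halive k hk) (halive i hi) hex'
          (fun j => (hp k).2 hk j) (fun j => (hp i).2 hi j)
      · exact key i k hil hik (halive i hi) (halive k hk) hex
          (fun j => (hp i).2 hi j) (fun j => (hp k).2 hk j)
  · intro hσ
    have hg := good_of_mem hσ
    refine ⟨fun j => if ι j ∈ σ then (if lst ∈ σ then 2 else 1) else (if lst ∈ σ then 4 else 5),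
      fun i => ⟨?_, ?_⟩⟩
    · -- pattern → i ∈ σ
      intro h
      by_contra hiσ
      by_cases hia : aliveN C i
      · by_cases hil : i = lst
        · have hN : leR C i lst := hil ▸ leR_refl i
          have hlstσ : lst ∉ σ := hil ▸ hiσ
          have h0 := h ⟨0, hd⟩
          simp only [if_neg hlstσ] at h0
          by_cases hq : ι ⟨0, hd⟩ ∈ σ
          · simp only [if_pos hq] at h0
            have hA : (2:ℝ) ≤ boxA C (ι ⟨0, hd⟩) lst i := by
              simp only [boxA]
              rw [if_pos hia]
              split_ifs <;> try norm_num
              all_goals tauto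
            linarith [h0.1]
          · simp only [if_neg hq] at h0
            have hB : boxB C (ι ⟨0, hd⟩) lst i ≤ 4 := by
              simp only [boxB]
              rw [if_pos hia]
              split_ifs <;> try norm_num
              all_goals tauto
            linarith [h0.2]
        · have h0 := h ⟨i.val, hival i hil⟩
          simp only [hιval i (hival i hil), if_neg hiσ] at h0
          have hbi : boxB C i lst i = 2 := by
            simp only [boxB]
            rw [if_pos hia, if_neg (by simp), if_pos (leR_refl i)]
          rw [hbi] at h0
          have h4 : (4:ℝ) ≤ if lst ∈ σ then (4:ℝ) else 5 := by
            split_ifs <;> norm_num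
          linarith [h0.2]
      · have h0 := h ⟨0, hd⟩
        simp only [boxA, boxB, if_neg hia] at h0
        linarith [h0.1, h0.2]
    · -- i ∈ σ → pattern
      intro hi j
      have hia : aliveN C i := ⟨σ, hσ, hi⟩
      have hnB : ι j ∈ σ → ¬(i ≠ ι j ∧ exR C (ι j) i) := by
        rintro hq ⟨hiq, hex⟩
        exact (hg.2.2 (ι j) hq i hi (Ne.symm hiq)) hex
      have hnD : ι j ∉ σ → ¬ leR C i (ι j) := fun hq hld => hq (hg.2.1 i hi _ hld)
      have hnN : lst ∉ σ → ¬ leR C i lst := fun hq hld => hq (hg.2.1 i hi _ hld)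
      by_cases hq : ι j ∈ σ <;> by_cases hl : lst ∈ σ
      · simp only [if_pos hq, if_pos hl]
        have h1 := hnB hq
        constructor
        · simp only [boxA]
          rw [if_pos hia]
          split_ifs <;> try norm_num
          all_goals tauto
        · simp only [boxB]
          rw [if_pos hia]
          split_ifs <;> try norm_num
          all_goals tauto
      · simp only [if_pos hq, if_neg hl]
        have h1 := hnB hq
        have h2 := hnN hl
        constructor
        · simp only [boxA]
          rw [if_pos hia]
          split_ifs <;> try norm_num
          all_goals tauto
        · simp only [boxB]
          rw [if_pos hia]
          split_ifs <;> try norm_num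
          all_goals tauto
      · simp only [if_neg hq, if_pos hl]
        have h1 := hnD hq
        constructor
        · simp only [boxA]
          rw [if_pos hia]
          split_ifs <;> try norm_num
          all_goals tauto
        · simp only [boxB]
          rw [if_pos hia]
          split_ifs <;> try norm_num
          all_goals tauto
      · simp only [if_neg hq, if_neg hl]
        have h1 := hnD hq
        have h2 := hnN hl
        constructor
        · simp only [boxA]
          rw [if_pos hia]
          split_ifs <;> try norm_num
          all_goals tauto
        · simp only [boxB]
          rw [if_pos hia]
          split_ifs <;> try norm_num
          all_goals tauto
end

section
/- The code 𝒮₃ := {{1,2,3},{1,4},{2,4},{3,4},{1},{2},{3},{4},∅} has a closed convex realization in ℝ² and an open convex realization in ℝ³; that is, there exist closed convex sets X₁,…,X₄ ⊆ ℝ² with code(X₁,…,X₄) = 𝒮₃, and open convex sets U₁,…,U₄ ⊆ ℝ³ with code(U₁,…,U₄) = 𝒮₃. -/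
/-- The code `𝒮₃`, on neurons `0,…,3` (representing `1,…,4`). -/
def S3 : Set (Finset (Fin 4)) :=
  {{0,1,2}, {0,3}, {1,3}, {2,3}, {0}, {1}, {2}, {3}, ∅}

/-! A point's codeword lies in `𝒮₃` exactly when it contains the third of `0, 1, 2` as soon as
it contains two of them, and does not contain `0`, `1` and `3`. So a family has code `𝒮₃` once
its nine codewords are witnessed by points and two of `U₀, U₁, U₂` always meet inside the third
and away from `U₃`. Both realizations are polyhedra `{p | A p ∈ B}` with `B` a closed (resp. open)
box. -/

theorem mem_S3_iff {σ : Finset (Fin 4)} :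
    σ ∈ S3 ↔ (0 ∈ σ → 1 ∈ σ → 2 ∈ σ) ∧ (0 ∈ σ → 2 ∈ σ → 1 ∈ σ) ∧
      (1 ∈ σ → 2 ∈ σ → 0 ∈ σ) ∧ ¬(0 ∈ σ ∧ 1 ∈ σ ∧ 3 ∈ σ) := by
  simp only [S3, Set.mem_insert_iff, Set.mem_singleton_iff]
  revert σ
  decide

theorem code_eq_S3 {X : Type*} {U : Fin 4 → Set X} (h01 : U 0 ∩ U 1 ⊆ U 2)
    (h02 : U 0 ∩ U 2 ⊆ U 1) (h12 : U 1 ∩ U 2 ⊆ U 0) (h3 : Disjoint (U 0 ∩ U 1) (U 3))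
    (hS3 : S3 ⊆ code U) : code U = S3 := by
  refine Set.Subset.antisymm ?_ hS3
  rintro σ ⟨p, hp⟩
  simp only [mem_S3_iff, ← hp]
  exact ⟨fun h0 h1 => h01 ⟨h0, h1⟩, fun h0 h2 => h02 ⟨h0, h2⟩, fun h1 h2 => h12 ⟨h1, h2⟩,
    fun ⟨h0, h1, h3'⟩ => h3.ne_of_mem ⟨h0, h1⟩ h3' rfl⟩

open Matrix

section Polyhedron

variable {m n : Type*} [Fintype n]

def closedPolyhedron (A : Matrix m n ℝ) (l u : m → ℝ) : Set (n → ℝ) :=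
  (A *ᵥ ·) ⁻¹' Set.Icc l u

def openPolyhedron (A : Matrix m n ℝ) (b : m → ℝ) : Set (n → ℝ) :=
  (A *ᵥ ·) ⁻¹' Set.univ.pi fun k => Set.Iio (b k)

theorem mem_closedPolyhedron {A : Matrix m n ℝ} {l u : m → ℝ} {p : n → ℝ} :
    p ∈ closedPolyhedron A l u ↔ ∀ k, l k ≤ (A *ᵥ p) k ∧ (A *ᵥ p) k ≤ u k := by
  simp [closedPolyhedron, Pi.le_def, forall_and]

theorem mem_openPolyhedron {A : Matrix m n ℝ} {b : m → ℝ} {p : n → ℝ} :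
    p ∈ openPolyhedron A b ↔ ∀ k, (A *ᵥ p) k < b k := by
  simp [openPolyhedron]

theorem isClosed_closedPolyhedron (A : Matrix m n ℝ) (l u : m → ℝ) :
    IsClosed (closedPolyhedron A l u) :=
  isClosed_Icc.preimage (continuous_const.matrix_mulVec continuous_id)

theorem convex_closedPolyhedron (A : Matrix m n ℝ) (l u : m → ℝ) :
    Convex ℝ (closedPolyhedron A l u) :=
  (convex_Icc l u).linear_preimage A.mulVecLin

theorem isOpen_openPolyhedron [Finite m] (A : Matrix m n ℝ) (b : m → ℝ) :
    IsOpen (openPolyhedron A b) :=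
  (isOpen_set_pi Set.finite_univ fun _ _ => isOpen_Iio).preimage
    (continuous_const.matrix_mulVec continuous_id)

theorem convex_openPolyhedron (A : Matrix m n ℝ) (b : m → ℝ) :
    Convex ℝ (openPolyhedron A b) :=
  (convex_pi fun k _ => convex_Iio (b k)).linear_preimage A.mulVecLin

end Polyhedron

/-- The segments from the origin to `(-1, 1)`, `(0, 1)`, `(1, 1)`, and the segment from `(-1, 1)`
to `(1, 1)`. -/
def closedRealizationS3 : Fin 4 → Set (Fin 2 → ℝ) :=
  ![closedPolyhedron !![1, 1; 0, 1] ![0, 0] ![0, 1],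
    closedPolyhedron !![1, 0; 0, 1] ![0, 0] ![0, 1],
    closedPolyhedron !![1, -1; 0, 1] ![0, 0] ![0, 1],
    closedPolyhedron !![0, 1; 1, 0] ![1, -1] ![1, 1]]

/-- `U₃` is the half-space `z > 1`; `U₀, U₁, U₂` lie over three triangles of the `(x, y)`-plane
any two of which meet in `T = {x, y > 0, x + y < 1}`. `U₀` and `U₁` share the roof
`z < 2y - 2x - 1`, which over `T` stays below both the height `1` and the roof `z < 3 - 2y`
of `U₂`. -/
def openRealizationS3 : Fin 4 → Set (Fin 3 → ℝ) :=
  ![openPolyhedron !![-1, 0, 0; 0, -1, 0; 1, 1, 0; 2, -2, 1] ![0, 0, 3, -1],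
    openPolyhedron !![1, 1, 0; 0, -1, 0; -1, 0, 0; 2, -2, 1] ![1, 0, 2, -1],
    openPolyhedron !![-1, 0, 0; 1, 1, 0; 0, -1, 0; 0, 2, 1] ![0, 1, 2, 3],
    openPolyhedron !![0, 0, -1] ![-1]]

theorem isClosed_and_convex_closedRealizationS3 (i : Fin 4) :
    IsClosed (closedRealizationS3 i) ∧ Convex ℝ (closedRealizationS3 i) := by
  fin_cases i <;> exact ⟨isClosed_closedPolyhedron _ _ _, convex_closedPolyhedron _ _ _⟩

theorem isOpen_and_convex_openRealizationS3 (i : Fin 4) :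
    IsOpen (openRealizationS3 i) ∧ Convex ℝ (openRealizationS3 i) := by
  fin_cases i <;> exact ⟨isOpen_openPolyhedron _ _, convex_openPolyhedron _ _⟩

theorem code_closedRealizationS3 : code closedRealizationS3 = S3 := by
  have hS3 : S3 ⊆ code closedRealizationS3 := by
    simp only [S3, Set.insert_subset_iff, Set.singleton_subset_iff]
    refine ⟨⟨![0, 0], ?_⟩, ⟨![-1, 1], ?_⟩, ⟨![0, 1], ?_⟩, ⟨![1, 1], ?_⟩, ⟨![-1/2, 1/2], ?_⟩,
      ⟨![0, 1/2], ?_⟩, ⟨![1/2, 1/2], ?_⟩, ⟨![1/2, 1], ?_⟩, ⟨![2, 0], ?_⟩⟩ <;>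
      intro i <;> fin_cases i <;>
      norm_num [closedRealizationS3, mem_closedPolyhedron, Fin.forall_fin_two, mulVec, dotProduct,
        Fin.ext_iff]
  refine code_eq_S3 ?_ ?_ ?_ ?_ hS3 <;>
    simp only [Set.subset_def, Set.disjoint_left, Set.mem_inter_iff, and_imp] <;>
    simp [closedRealizationS3, mem_closedPolyhedron, Fin.forall_fin_two, mulVec, dotProduct] <;>
    intros <;> and_intros <;> linarith

theorem code_openRealizationS3 : code openRealizationS3 = S3 := by
  have hS3 : S3 ⊆ code openRealizationS3 := by
    simp only [S3, Set.insert_subset_iff, Set.singleton_subset_iff]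
    refine ⟨⟨![1/4, 1/4, -10], ?_⟩, ⟨![1/10, 5/2, 2], ?_⟩, ⟨![-3/2, 1/2, 2], ?_⟩,
      ⟨![1/2, -3/2, 2], ?_⟩, ⟨![1/10, 5/2, 0], ?_⟩, ⟨![-3/2, 1/2, 0], ?_⟩,
      ⟨![1/2, -3/2, 0], ?_⟩, ⟨![10, 10, 2], ?_⟩, ⟨![10, 10, 0], ?_⟩⟩ <;>
      intro i <;> fin_cases i <;>
      norm_num [openRealizationS3, mem_openPolyhedron, Fin.forall_fin_succ, mulVec, dotProduct,
        Fin.sum_univ_succ, Fin.ext_iff]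
  refine code_eq_S3 ?_ ?_ ?_ ?_ hS3 <;>
    simp only [Set.subset_def, Set.disjoint_left, Set.mem_inter_iff, and_imp] <;>
    simp [openRealizationS3, mem_openPolyhedron, Fin.forall_fin_succ, mulVec, dotProduct,
      Fin.sum_univ_succ] <;>
    intros <;> and_intros <;> linarith

/-- `𝒮₃` has a closed convex realization in ℝ² and an open convex
realization in ℝ³. -/
theorem S3_closed_dim2_open_dim3 :
    (∃ X : Fin 4 → Set (Fin 2 → ℝ),
      (∀ i, IsClosed (X i) ∧ Convex ℝ (X i)) ∧ code X = S3) ∧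
    (∃ U : Fin 4 → Set (Fin 3 → ℝ),
      (∀ i, IsOpen (U i) ∧ Convex ℝ (U i)) ∧ code U = S3) :=
  ⟨⟨closedRealizationS3, isClosed_and_convex_closedRealizationS3, code_closedRealizationS3⟩,
    ⟨openRealizationS3, isOpen_and_convex_openRealizationS3, code_openRealizationS3⟩⟩
end

section
/- The code 𝒮₃ := {{1,2,3},{1,4},{2,4},{3,4},{1},{2},{3},{4},∅} has no open convex realization in ℝ²: there is no family U₁,…,U₄ of open convex subsets of ℝ² with code(U₁,…,U₄) = 𝒮₃. Consequently odim(𝒮₃) = 3. -/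
/-!
Let open convex `U₀, …, U₃` realize `𝒮₃` in the plane and put `W = U₀ ∩ U₁ ∩ U₂`: it is
nonempty, contains every pairwise intersection of `U₀, U₁, U₂`, and misses `U₃`, which meets
each of `U₀, U₁, U₂`. Separate `W` from `U₃` by a functional `f` and let `γ = sup_W f`. As `W`
is open, `f < γ` on `W`, so on the line `L = {f = γ}` the traces of `U₀, U₁, U₂` are pairwise
disjoint intervals, all nonempty. The middle one, say that of `B`, has positive length because
`B` is open. But the other two sets `A`, `C` contain points `w ∈ W` with `f w` arbitrarily close
to `γ`; joining such a `w` to points of `A` and of `C` at a common height above `L` gives points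
of `A ∩ L` and `C ∩ L` arbitrarily close to each other, although the trace of `B` lies between
them.

In `ℝ³` the code is realized by `Uᵢ = ⋂_{j ≠ i} Hⱼ` for three half-spaces `Hⱼ` and
`U₃ = {z > 2}`, and realizations lift to higher dimensions as cylinders.
-/

open Set Module

theorem Set.OrdConnected.lt_of_disjoint {α : Type*} [LinearOrder α] {I J : Set α}
    (hI : I.OrdConnected) (hJ : J.OrdConnected) (hIJ : Disjoint I J) {x y a b : α}
    (hx : x ∈ I) (hy : y ∈ J) (hxy : x < y) (ha : a ∈ I) (hb : b ∈ J) : a < b := by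
  by_contra! hba
  rcases le_or_gt x b with hxb | hbx
  · exact hIJ.notMem_of_mem_right hb (hI.out hx ha ⟨hxb, hba⟩)
  · exact hIJ.notMem_of_mem_left hx (hJ.out hb hy ⟨hbx.le, hxy.le⟩)

theorem exists_lt_lt_of_injective {α : Type*} [LinearOrder α] {y : Fin 3 → α}
    (hy : Function.Injective y) : ∃ i j k, y i < y j ∧ y j < y k := by
  obtain ⟨i, hi⟩ := Finite.exists_min y
  obtain ⟨k, hk⟩ := Finite.exists_max y
  obtain ⟨j, hji, hjk⟩ : ∃ j, j ≠ i ∧ j ≠ k := by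
    clear hi hk
    revert i k
    decide
  exact ⟨i, j, k, (hi j).lt_of_ne (hy.ne hji.symm), (hk j).lt_of_ne (hy.ne hjk)⟩

section Level

variable {E : Type*} [AddCommGroup E] [Module ℝ E]

theorem Convex.exists_mem_apply_eq {S : Set E} (hS : Convex ℝ S) (f : E →ₗ[ℝ] ℝ) {a b : E}
    (ha : a ∈ S) (hb : b ∈ S) {β : ℝ} (hβ : β ∈ Icc (f a) (f b)) : ∃ x ∈ S, f x = β :=
  (convex_iff_ordConnected.1 (hS.linear_image f)).out ⟨a, ha, rfl⟩ ⟨b, hb, rfl⟩ hβ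

theorem Convex.apply_lt_of_injOn {A B L : Set E} (hA : Convex ℝ A) (hB : Convex ℝ B)
    (hL : Convex ℝ L) {g : E →ₗ[ℝ] ℝ} (hg : InjOn g L) (hAB : Disjoint (A ∩ L) (B ∩ L))
    {x y a b : E} (hx : x ∈ A ∩ L) (hy : y ∈ B ∩ L) (hxy : g x < g y)
    (ha : a ∈ A ∩ L) (hb : b ∈ B ∩ L) : g a < g b :=
  Set.OrdConnected.lt_of_disjoint (convex_iff_ordConnected.1 ((hA.inter hL).linear_image g))
    (convex_iff_ordConnected.1 ((hB.inter hL).linear_image g))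
    (hAB.image hg inter_subset_right inter_subset_right)
    (mem_image_of_mem g hx) (mem_image_of_mem g hy) hxy (mem_image_of_mem g ha)
    (mem_image_of_mem g hb)

theorem Convex.exists_level_points_close {A C : Set E} (hA : Convex ℝ A) (hC : Convex ℝ C)
    (f g : E →ₗ[ℝ] ℝ) {γ β : ℝ} (hγβ : γ < β) {qa qc : E} (hqa : qa ∈ A) (hqc : qc ∈ C)
    (hfqa : f qa = β) (hfqc : f qc = β)
    (happrox : ∀ ε > 0, ∃ w ∈ A ∩ C, γ - ε < f w ∧ f w < γ) {ε : ℝ} (hε : 0 < ε) :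
    ∃ a ∈ A, ∃ c ∈ C, f a = γ ∧ f c = γ ∧ g c - g a < ε := by
  have hβγ : 0 < β - γ := sub_pos.2 hγβ
  set D := |g qc - g qa|
  obtain ⟨w, ⟨hwA, hwC⟩, hw, hwγ⟩ := happrox (ε * (β - γ) / (D + 1)) (by positivity)
  -- both feet use the same parameter `s` because `qa` and `qc` lie on the same level `β`
  set s := (γ - f w) / (β - f w)
  have hs0 : 0 < s := div_pos (by linarith) (by linarith)
  have hs1 : s ≤ 1 := (div_le_one (by linarith)).2 (by linarith)
  have hfoot : ∀ q, f q = β → f (AffineMap.lineMap w q s) = γ := fun q hq => by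
    have : s * (β - f w) = γ - f w := div_mul_cancel₀ _ (by linarith)
    rw [AffineMap.lineMap_apply_module, map_add, map_smul, map_smul, hq, smul_eq_mul,
      smul_eq_mul]
    linear_combination this
  refine ⟨_, hA.lineMap_mem hwA hqa ⟨hs0.le, hs1⟩, _, hC.lineMap_mem hwC hqc ⟨hs0.le, hs1⟩,
    hfoot qa hfqa, hfoot qc hfqc, ?_⟩
  have hgap : g (AffineMap.lineMap w qc s) - g (AffineMap.lineMap w qa s)
      = s * (g qc - g qa) := by
    simp only [AffineMap.lineMap_apply_module, map_add, map_smul, smul_eq_mul]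
    ring
  have hsD : s * D < ε := by
    have hs : s < ε / (D + 1) := calc
      s ≤ (γ - f w) / (β - γ) := div_le_div_of_nonneg_left (by linarith) hβγ (by linarith)
      _ < ε / (D + 1) := by
        rw [div_lt_div_iff₀ hβγ (by positivity)]
        rw [sub_lt_comm, lt_div_iff₀ (by positivity)] at hw
        linarith
    calc s * D ≤ s * (D + 1) := by nlinarith
      _ < ε := (lt_div_iff₀ (by positivity)).1 hs
  rw [hgap]
  exact (mul_le_mul_of_nonneg_left (le_abs_self _) hs0.le).trans_lt hsD

theorem Convex.false_of_level_sandwich {A B C : Set E} (hA : Convex ℝ A) (hB : Convex ℝ B)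
    (hC : Convex ℝ C) {f g : E →ₗ[ℝ] ℝ} {γ : ℝ} (hg : InjOn g (f ⁻¹' {γ}))
    (hAB : Disjoint (A ∩ f ⁻¹' {γ}) (B ∩ f ⁻¹' {γ}))
    (hBC : Disjoint (B ∩ f ⁻¹' {γ}) (C ∩ f ⁻¹' {γ}))
    (happrox : ∀ ε > 0, ∃ w ∈ A ∩ C, γ - ε < f w ∧ f w < γ)
    {qa qc : E} (hqa : qa ∈ A) (hqc : qc ∈ C) (hfqa : γ < f qa) (hfqc : γ < f qc)
    {x y y' z : E} (hx : x ∈ A ∩ f ⁻¹' {γ}) (hy : y ∈ B ∩ f ⁻¹' {γ})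
    (hy' : y' ∈ B ∩ f ⁻¹' {γ}) (hz : z ∈ C ∩ f ⁻¹' {γ})
    (hxy : g x < g y) (hyz : g y < g z) (hyy' : g y < g y') : False := by
  have hL : Convex ℝ (f ⁻¹' {γ}) := (convex_singleton γ).linear_preimage f
  obtain ⟨w, hwAC, -, hwγ⟩ := happrox 1 one_pos
  have hwβ : f w ≤ min (f qa) (f qc) := (hwγ.trans (lt_min hfqa hfqc)).le
  obtain ⟨pa, hpa, hfpa⟩ := hA.exists_mem_apply_eq f hwAC.1 hqa ⟨hwβ, min_le_left _ _⟩
  obtain ⟨pc, hpc, hfpc⟩ := hC.exists_mem_apply_eq f hwAC.2 hqc ⟨hwβ, min_le_right _ _⟩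
  obtain ⟨a, ha, c, hc, hfa, hfc, hac⟩ := hA.exists_level_points_close hC f g
    (lt_min hfqa hfqc) hpa hpc hfpa hfpc happrox (sub_pos.2 hyy')
  have hay : g a < g y := hA.apply_lt_of_injOn hB hL hg hAB hx hy hxy ⟨ha, hfa⟩ hy
  have hy'c : g y' < g c := hB.apply_lt_of_injOn hC hL hg hBC hy hz hyz hy' ⟨hc, hfc⟩
  linarith

end Level

theorem exists_level_separating_of_disjoint {E : Type*} [TopologicalSpace E] [AddCommGroup E]
    [IsTopologicalAddGroup E] [Module ℝ E] [ContinuousSMul ℝ E] [LocallyConvexSpace ℝ E]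
    {W D : Set E} (hWo : IsOpen W) (hWc : Convex ℝ W) (hDo : IsOpen D) (hDc : Convex ℝ D)
    (hWD : Disjoint W D) (hW : W.Nonempty) (hD : D.Nonempty) :
    ∃ (f : E →ₗ[ℝ] ℝ) (γ : ℝ), (∀ p ∈ W, f p < γ) ∧ (∀ ε > 0, ∃ p ∈ W, γ - ε < f p) ∧
      ∀ p ∈ D, γ < f p := by
  obtain ⟨f, u, hfW, hfD⟩ := geometric_hahn_banach_open_open hWc hWo hDc hDo hWD
  obtain ⟨w, hw⟩ := hW
  obtain ⟨d, hd⟩ := hD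
  have hf : f ≠ 0 := by
    rintro rfl
    exact (hfW w hw).not_gt (hfD d hd)
  have hlub : IsLUB (f '' W) (sSup (f '' W)) :=
    isLUB_csSup ⟨f w, w, hw, rfl⟩ ⟨u, forall_mem_image.2 fun p hp => (hfW p hp).le⟩
  have hopen : IsOpen (f '' W) := f.isOpenMap_of_ne_zero hf W hWo
  refine ⟨f, sSup (f '' W), fun p hp => (hlub.1 ⟨p, hp, rfl⟩).lt_of_ne fun hp' => ?_,
    fun ε hε => ?_, fun p hp => ?_⟩
  · obtain ⟨b, hb, hbW⟩ := Filter.Eventually.exists_gt (hopen.mem_nhds ⟨p, hp, hp'⟩)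
    exact (hlub.1 hbW).not_gt hb
  · obtain ⟨_, ⟨p, hp, rfl⟩, hpε, -⟩ := hlub.exists_between (sub_lt_self _ hε)
    exact ⟨p, hp, hpε⟩
  · exact (hlub.2 (forall_mem_image.2 fun q hq => (hfW q hq).le)).trans_lt (hfD p hp)

theorem exists_injOn_level_of_finrank_eq_two {E : Type*} [AddCommGroup E] [Module ℝ E]
    [FiniteDimensional ℝ E] (hE : finrank ℝ E = 2) {f : E →ₗ[ℝ] ℝ} (hf : f ≠ 0) :
    ∃ (g : E →ₗ[ℝ] ℝ) (v : E), f v = 0 ∧ g v = 1 ∧ ∀ γ, InjOn g (f ⁻¹' {γ}) := by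
  have hker : finrank ℝ (LinearMap.ker f) = 1 := by
    have := Module.Dual.finrank_ker_add_one_of_ne_zero hf
    omega
  obtain ⟨⟨v, hv⟩, hv0, hspan⟩ := finrank_eq_one_iff'.1 hker
  obtain ⟨g, hg⟩ := Module.Projective.exists_dual_eq_one ℝ (x := v) (by simpa using hv0)
  refine ⟨g, v, hv, hg, fun γ p hp q hq hpq => ?_⟩
  obtain ⟨c, hc⟩ := hspan ⟨p - q, by simp_all⟩
  have hc : c • v = p - q := congrArg Subtype.val hc
  have : c = 0 := by simpa [hg, hpq] using congrArg g hc
  rw [← sub_eq_zero, ← hc, this, zero_smul]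

theorem IsOpen.exists_pos_add_smul_mem {E : Type*} [TopologicalSpace E] [AddCommGroup E]
    [IsTopologicalAddGroup E] [Module ℝ E] [ContinuousSMul ℝ E] {V : Set E} (hV : IsOpen V)
    {x : E} (hx : x ∈ V) (v : E) : ∃ δ > (0 : ℝ), x + δ • v ∈ V :=
  Filter.Eventually.exists_gt <|
    (Continuous.tendsto (by fun_prop) 0).eventually (hV.mem_nhds (by simpa using hx))

theorem inter_iInter_nonempty_of_finrank_eq_two {E : Type*} [NormedAddCommGroup E]
    [NormedSpace ℝ E] [FiniteDimensional ℝ E] (hE : finrank ℝ E = 2) {V : Fin 3 → Set E}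
    {D : Set E} (hVo : ∀ i, IsOpen (V i)) (hVc : ∀ i, Convex ℝ (V i)) (hDo : IsOpen D)
    (hDc : Convex ℝ D) (hW : (⋂ i, V i).Nonempty)
    (hpair : ∀ i j, i ≠ j → V i ∩ V j ⊆ ⋂ k, V k) (hVD : ∀ i, (V i ∩ D).Nonempty) :
    (D ∩ ⋂ i, V i).Nonempty := by
  by_contra hDW
  choose q hqV hqD using hVD
  obtain ⟨f, γ, hWγ, happrox, hDγ⟩ := exists_level_separating_of_disjoint
    (isOpen_iInter_of_finite hVo) (convex_iInter hVc) hDo hDc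
    (by rwa [disjoint_comm, disjoint_iff_inter_eq_empty, ← not_nonempty_iff_eq_empty]) hW
    ⟨q 0, hqD 0⟩
  obtain ⟨w, hw⟩ := hW
  have hf : f ≠ 0 := by
    rintro rfl
    exact (hWγ w hw).not_gt (hDγ (q 0) (hqD 0))
  obtain ⟨g, v, hfv, hgv, hg⟩ := exists_injOn_level_of_finrank_eq_two hE hf
  have hx : ∀ i, ∃ x ∈ V i, f x = γ := fun i => (hVc i).exists_mem_apply_eq f
    (mem_iInter.1 hw i) (hqV i) ⟨(hWγ w hw).le, (hDγ _ (hqD i)).le⟩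
  choose x hxV hfx using hx
  have hdisj : ∀ i j, i ≠ j → Disjoint (V i ∩ f ⁻¹' {γ}) (V j ∩ f ⁻¹' {γ}) := by
    refine fun i j hij => disjoint_left.2 fun p hpi hpj => ?_
    exact (hWγ p (hpair i j hij ⟨hpi.1, hpj.1⟩)).ne hpi.2
  have hgx : Function.Injective (g ∘ x) := by
    intro i j hij
    by_contra hne
    exact disjoint_left.1 (hdisj i j hne) ⟨hxV i, hfx i⟩
      (hg γ (hfx i) (hfx j) hij ▸ ⟨hxV j, hfx j⟩)
  -- `V j` is the set whose trace on the level line lies between the other two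
  obtain ⟨i, j, k, hij, hjk⟩ := exists_lt_lt_of_injective hgx
  have happroxAC : ∀ ε > 0, ∃ p ∈ V i ∩ V k, γ - ε < f p ∧ f p < γ := fun ε hε =>
    let ⟨p, hp, hpε⟩ := happrox ε hε
    ⟨p, ⟨mem_iInter.1 hp i, mem_iInter.1 hp k⟩, hpε, hWγ p hp⟩
  obtain ⟨δ, hδ, hδV⟩ := (hVo j).exists_pos_add_smul_mem (hxV j) v
  exact (hVc i).false_of_level_sandwich (hVc j) (hVc k) (hg γ)
    (hdisj i j (ne_of_apply_ne _ hij.ne)) (hdisj j k (ne_of_apply_ne _ hjk.ne)) happroxAC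
    (hqV i) (hqV k) (hDγ _ (hqD i)) (hDγ _ (hqD k)) ⟨hxV i, hfx i⟩ ⟨hxV j, hfx j⟩
    ⟨hδV, by simp [hfv, hfx j]⟩ ⟨hxV k, hfx k⟩ hij hjk (by simp [hgv, hδ])

theorem code_preimage {X Y : Type*} {n : ℕ} (U : Fin n → Set X) {π : Y → X}
    (hπ : Function.Surjective π) : code (fun i => π ⁻¹' U i) = code U := by
  ext σ
  constructor
  · rintro ⟨y, hy⟩
    exact ⟨π y, hy⟩
  · rintro ⟨p, hp⟩
    obtain ⟨y, rfl⟩ := hπ p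
    exact ⟨y, hp⟩

theorem exists_mem_code {X : Type*} {n : ℕ} (U : Fin n → Set X) (p : X) :
    ∃ σ ∈ code U, ∀ i, p ∈ U i ↔ i ∈ σ := by
  classical
  exact ⟨Finset.univ.filter (p ∈ U ·), ⟨p, by simp⟩, by simp⟩

def OpenConvexRealizable {n : ℕ} (C : Set (Finset (Fin n))) (d : ℕ) : Prop :=
  ∃ U : Fin n → Set (Fin d → ℝ), (∀ i, IsOpen (U i) ∧ Convex ℝ (U i)) ∧ code U = C

theorem OpenConvexRealizable.mono {n : ℕ} {C : Set (Finset (Fin n))} {d e : ℕ} (hde : d ≤ e)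
    (hC : OpenConvexRealizable C d) : OpenConvexRealizable C e := by
  obtain ⟨U, hU, rfl⟩ := hC
  set π := LinearMap.funLeft ℝ ℝ (Fin.castLE hde)
  refine ⟨fun i => π ⁻¹' U i, fun i => ⟨(hU i).1.preimage π.continuous_of_finiteDimensional,
    (hU i).2.linear_preimage π⟩, code_preimage U ?_⟩
  exact LinearMap.funLeft_surjective_of_injective _ _ _ (Fin.castLE_injective hde)

theorem mem_S3_iff_s13 {σ : Finset (Fin 4)} : σ ∈ S3 ↔ ∀ i j : Fin 3, i ≠ j → i.castSucc ∈ σ →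
    j.castSucc ∈ σ → (∀ k : Fin 3, k.castSucc ∈ σ) ∧ Fin.last 3 ∉ σ := by
  have : S3 = ↑({{0,1,2}, {0,3}, {1,3}, {2,3}, {0}, {1}, {2}, {3}, ∅} :
      Finset (Finset (Fin 4))) := by
    ext
    simp [S3]
  rw [this, Finset.mem_coe]
  revert σ
  decide

theorem insert_castSucc_last_mem_S3 (i : Fin 3) : {i.castSucc, Fin.last 3} ∈ S3 := by
  fin_cases i <;> simp [S3]

theorem code_ne_S3_of_finrank_eq_two {E : Type*} [NormedAddCommGroup E] [NormedSpace ℝ E]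
    [FiniteDimensional ℝ E] (hE : finrank ℝ E = 2) {U : Fin 4 → Set E}
    (hUo : ∀ i, IsOpen (U i)) (hUc : ∀ i, Convex ℝ (U i)) : code U ≠ S3 := by
  intro hU
  have hpat : ∀ p, ∃ σ ∈ S3, ∀ i, p ∈ U i ↔ i ∈ σ := hU ▸ exists_mem_code U
  have hpair : ∀ i j : Fin 3, i ≠ j →
      U i.castSucc ∩ U j.castSucc ⊆ ⋂ k : Fin 3, U k.castSucc := by
    rintro i j hij p ⟨hpi, hpj⟩
    obtain ⟨σ, hσ, hp⟩ := hpat p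
    exact mem_iInter.2 fun k => (hp _).2
      ((mem_S3_iff_s13.1 hσ i j hij ((hp _).1 hpi) ((hp _).1 hpj)).1 k)
  have hW : (⋂ k : Fin 3, U k.castSucc).Nonempty := by
    obtain ⟨p, hp⟩ : ({0, 1, 2} : Finset (Fin 4)) ∈ code U := hU ▸ by simp [S3]
    exact ⟨p, mem_iInter.2 fun k => (hp _).2 (by fin_cases k <;> decide)⟩
  have hVD : ∀ i : Fin 3, (U i.castSucc ∩ U (Fin.last 3)).Nonempty := fun i => by
    obtain ⟨p, hp⟩ := hU ▸ insert_castSucc_last_mem_S3 i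
    exact ⟨p, (hp _).2 (by simp), (hp _).2 (by simp)⟩
  obtain ⟨p, hpD, hpW⟩ := inter_iInter_nonempty_of_finrank_eq_two hE (fun i => hUo _)
    (fun i => hUc _) (hUo _) (hUc _) hW hpair hVD
  obtain ⟨σ, hσ, hp⟩ := hpat p
  exact (mem_S3_iff_s13.1 hσ 0 1 (by decide) ((hp _).1 (mem_iInter.1 hpW 0))
    ((hp _).1 (mem_iInter.1 hpW 1))).2 ((hp _).1 hpD)

theorem not_openConvexRealizable_S3_two : ¬ OpenConvexRealizable S3 2 := by
  rintro ⟨U, hU, hcode⟩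
  exact code_ne_S3_of_finrank_eq_two (Module.finrank_fin_fun ℝ) (fun i => (hU i).1)
    (fun i => (hU i).2) hcode

def halfspace3 : Fin 3 → Set (Fin 3 → ℝ)
  | 0 => {p | p 2 + p 0 < 2}
  | 1 => {p | p 2 + p 1 < 2}
  | 2 => {p | p 2 - p 0 - p 1 < 2}

def realization3 : Fin 4 → Set (Fin 3 → ℝ)
  | 0 => halfspace3 1 ∩ halfspace3 2
  | 1 => halfspace3 0 ∩ halfspace3 2
  | 2 => halfspace3 0 ∩ halfspace3 1
  | 3 => {p | 2 < p 2}

theorem isOpen_and_convex_halfspace3 (j : Fin 3) :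
    IsOpen (halfspace3 j) ∧ Convex ℝ (halfspace3 j) := by
  fin_cases j <;> exact ⟨isOpen_lt (by fun_prop) continuous_const, convex_halfSpace_lt
    ⟨fun x y => by simp only [Pi.add_apply]; ring,
      fun c x => by simp only [Pi.smul_apply, smul_eq_mul]; ring⟩ 2⟩

theorem isOpen_and_convex_realization3 (i : Fin 4) :
    IsOpen (realization3 i) ∧ Convex ℝ (realization3 i) := by
  have h := isOpen_and_convex_halfspace3
  fin_cases i
  · exact ⟨(h 1).1.inter (h 2).1, (h 1).2.inter (h 2).2⟩
  · exact ⟨(h 0).1.inter (h 2).1, (h 0).2.inter (h 2).2⟩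
  · exact ⟨(h 0).1.inter (h 1).1, (h 0).2.inter (h 1).2⟩
  · exact ⟨isOpen_lt continuous_const (continuous_apply 2),
      convex_halfSpace_gt ⟨fun x y => rfl, fun c x => rfl⟩ 2⟩

theorem realization3_pair {p : Fin 3 → ℝ} {i j : Fin 3} (hij : i ≠ j)
    (hi : p ∈ realization3 i.castSucc) (hj : p ∈ realization3 j.castSucc) :
    (∀ k : Fin 3, p ∈ realization3 k.castSucc) ∧ p ∉ realization3 (Fin.last 3) := by
  have hH : ∀ k, p ∈ halfspace3 k := by
    fin_cases i <;> fin_cases j <;> simp_all [realization3, Fin.forall_fin_succ]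
  refine ⟨fun k => by fin_cases k <;> exact ⟨hH _, hH _⟩, fun hz => ?_⟩
  have h0 := hH 0
  have h1 := hH 1
  have h2 := hH 2
  simp only [realization3, halfspace3, Fin.last, mem_ofPred_eq] at h0 h1 h2 hz
  linarith

theorem code_realization3 : code realization3 = S3 := by
  ext σ
  constructor
  · rintro ⟨p, hp⟩
    rw [mem_S3_iff_s13]
    intro i j hij hi hj
    simpa only [hp] using realization3_pair hij ((hp _).2 hi) ((hp _).2 hj)
  · intro hσ
    simp only [S3, mem_insert_iff, mem_singleton_iff] at hσ
    rcases hσ with rfl | rfl | rfl | rfl | rfl | rfl | rfl | rfl | rfl <;>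
      [use ![0, 0, 0]; use ![6, -2, 3]; use ![-2, 6, 3]; use ![-2, -2, 3]; use ![6, -2, 0];
        use ![-2, 6, 0]; use ![-2, -2, 0]; use ![0, 0, 3]; use ![6, 6, 0]] <;>
      intro i <;> fin_cases i <;>
      norm_num [realization3, halfspace3, Fin.ext_iff, Matrix.cons_val_two]

theorem openConvexRealizable_S3_three : OpenConvexRealizable S3 3 :=
  ⟨realization3, isOpen_and_convex_realization3, code_realization3⟩

/-- `𝒮₃` has no open convex realization in ℝ²; consequently its open
embedding dimension is `3`. -/
theorem S3_no_open_realization_dim2 :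
    (¬ ∃ U : Fin 4 → Set (Fin 2 → ℝ),
      (∀ i, IsOpen (U i) ∧ Convex ℝ (U i)) ∧ code U = S3) ∧
    sInf {d : ℕ | ∃ U : Fin 4 → Set (Fin d → ℝ),
      (∀ i, IsOpen (U i) ∧ Convex ℝ (U i)) ∧ code U = S3} = 3 :=
  ⟨not_openConvexRealizable_S3_two, (Nat.sInf_upward_closed_eq_succ_iff
    (fun _ _ hde hd => OpenConvexRealizable.mono hde hd) 2).2
    ⟨openConvexRealizable_S3_three, not_openConvexRealizable_S3_two⟩⟩
end
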